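/- arXiv:2506.11426 — 7 statements merged into one kernel-verified Lean document; each statement's English description precedes it below -/
import Mathlib

section
/- Let Ω ⊆ ℂ² be a nonempty open set, let a, b, c be holomorphic on Ω, and let f be a nowhere-vanishing holomorphic function on Ω satisfying (∂x f)/f = −b. Define a' = a + (∂y f)/f and c' = c + a·(∂x f)/f + b·(∂y f)/f + (∂x∂y f)/f. Then: (i) for every holomorphic u on Ω, (1/f)·(∂x∂y(f·u) + a·∂x(f·u) + b·∂y(f·u) + c·(f·u)) = ∂x∂y u + a'·∂x u + c'·u (the ∂y-term vanishes); and (ii) ∂x a' = h − k and c' = −k on Ω, where h = ∂x a + a·b − c and k = ∂y b + a·b − c are the invariants of M. -/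
/-!
Everything analytic reduces to two facts about a holomorphic `g` on an open subset of `ℂ²`:
`∂y g` is holomorphic in `x`, and `∂y ∂x g = ∂x ∂y g`. Both follow from Cauchy's estimates,
which make the difference quotients `(g (x, y + h) - g (x, y)) / h`, holomorphic in `x`,
converge to `∂y g (x, y)` uniformly in `x`; a locally uniform limit of holomorphic functions is
holomorphic and the derivatives converge. Differentiating `∂x f = -b f` in `y` then gives
`∂x ∂y f = -(∂y b) f - b ∂y f`, and the identities become algebra.
-/

/-- Partial derivative in the first (x) variable of a function on ℂ². -/
noncomputable def pdx (u : ℂ × ℂ → ℂ) : ℂ × ℂ → ℂ :=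
  fun p => deriv (fun t => u (t, p.2)) p.1

/-- Partial derivative in the second (y) variable of a function on ℂ². -/
noncomputable def pdy (u : ℂ × ℂ → ℂ) : ℂ × ℂ → ℂ :=
  fun p => deriv (fun t => u (p.1, t)) p.2

open Metric Set Filter Topology

theorem norm_dslope_sub_deriv_le {E : Type*} [NormedAddCommGroup E] [NormedSpace ℂ E]
    [CompleteSpace E] {φ : ℂ → E} {c z : ℂ} {r M : ℝ} (hr : 0 < r)
    (hφ : DifferentiableOn ℂ φ (closedBall c r)) (hM : ∀ w ∈ sphere c r, ‖φ w‖ ≤ M)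
    (hz : z ∈ closedBall c (r / 2)) :
    ‖dslope φ c z - deriv φ c‖ ≤ 4 * M / r ^ 2 * ‖z - c‖ := by
  -- `dslope φ c` is holomorphic and bounded by `2 * M / r` (maximum modulus); Cauchy's estimate on
  -- discs of radius `r / 2` bounds its derivative, and the mean value inequality concludes.
  have hmax : ∀ {ψ : ℂ → E} {C : ℝ}, DifferentiableOn ℂ ψ (closedBall c r) →
      (∀ w ∈ sphere c r, ‖ψ w‖ ≤ C) → ∀ w ∈ closedBall c r, ‖ψ w‖ ≤ C :=
    fun hψ hC w hw => Complex.norm_le_of_forall_mem_frontier_norm_le isBounded_ball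
      (hψ.diffContOnCl_ball subset_rfl) (by rwa [frontier_ball c hr.ne'])
      (by rwa [closure_ball c hr.ne'])
  have hψ : DifferentiableOn ℂ (dslope φ c) (closedBall c r) :=
    (Complex.differentiableOn_dslope (closedBall_mem_nhds c hr)).2 hφ
  have hψ_sphere : ∀ w ∈ sphere c r, ‖dslope φ c w‖ ≤ 2 * M / r := by
    intro w hw
    have hwc : ‖w - c‖ = r := by simpa [dist_eq_norm] using hw
    have hw0 : w ≠ c := by rintro rfl; simp at hwc; linarith
    rw [dslope_of_ne _ hw0, slope_def_module, norm_smul, norm_inv, hwc, div_eq_inv_mul, two_mul]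
    gcongr
    exact (norm_sub_le _ _).trans (add_le_add (hM w hw)
      (hmax hφ hM c (mem_closedBall_self hr.le)))
  have hderiv : ∀ w ∈ closedBall c (r / 2), ‖deriv (dslope φ c) w‖ ≤ 4 * M / r ^ 2 := by
    intro w hw
    have hsub : closedBall w (r / 2) ⊆ closedBall c r :=
      closedBall_subset_closedBall' (by rw [mem_closedBall] at hw; linarith)
    calc ‖deriv (dslope φ c) w‖ ≤ 2 * M / r / (r / 2) :=
          Complex.norm_deriv_le_of_forall_mem_sphere_norm_le (half_pos hr)
            (hψ.diffContOnCl_ball hsub)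
            (fun v hv => hmax hψ hψ_sphere v (hsub (sphere_subset_closedBall hv)))
      _ = 4 * M / r ^ 2 := by field_simp; ring
  have hψ_diff : ∀ w ∈ closedBall c (r / 2), DifferentiableAt ℂ (dslope φ c) w := fun w hw =>
    hψ.differentiableAt (closedBall_mem_nhds_of_mem (closedBall_subset_ball (by linarith) hw))
  simpa only [dslope_same] using (convex_closedBall c (r / 2)).norm_image_sub_le_of_norm_deriv_le
    hψ_diff hderiv (mem_closedBall_self (by linarith)) hz

theorem Prod.mk_mem_closedBall {α β : Type*} [PseudoMetricSpace α] [PseudoMetricSpace β]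
    {p : α × β} {r : ℝ} {x : α} {y : β} (hx : x ∈ closedBall p.1 r) (hy : y ∈ closedBall p.2 r) :
    (x, y) ∈ closedBall p r := by
  rw [← closedBall_prod_same]; exact ⟨hx, hy⟩

section Slices

variable {g : ℂ × ℂ → ℂ} {p : ℂ × ℂ}

theorem DifferentiableAt.comp_mk_fst (hg : DifferentiableAt ℂ g p) :
    DifferentiableAt ℂ (fun t => g (t, p.2)) p.1 :=
  hg.comp p.1 (differentiableAt_id.prodMk (differentiableAt_const p.2))

theorem DifferentiableAt.comp_mk_snd (hg : DifferentiableAt ℂ g p) :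
    DifferentiableAt ℂ (fun t => g (p.1, t)) p.2 :=
  hg.comp p.2 ((differentiableAt_const p.1).prodMk differentiableAt_id)

theorem Filter.EventuallyEq.pdx_eq {g' : ℂ × ℂ → ℂ} (h : g =ᶠ[𝓝 p] g') : pdx g p = pdx g' p :=
  (h.comp_tendsto ((continuous_id.prodMk continuous_const).tendsto' p.1 p rfl)).deriv_eq

theorem Filter.EventuallyEq.pdy_eq {g' : ℂ × ℂ → ℂ} (h : g =ᶠ[𝓝 p] g') : pdy g p = pdy g' p :=
  (h.comp_tendsto ((continuous_const.prodMk continuous_id).tendsto' p.2 p rfl)).deriv_eq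

end Slices

section MixedPartials

variable {g : ℂ × ℂ → ℂ} {p : ℂ × ℂ} {r : ℝ}

theorem tendstoUniformlyOn_slope_snd (hr : 0 < r) (hg : DifferentiableOn ℂ g (closedBall p r)) :
    TendstoUniformlyOn (fun h x => h⁻¹ * (g (x, p.2 + h) - g (x, p.2)))
      (fun x => pdy g (x, p.2)) (𝓝[≠] 0) (closedBall p.1 r) := by
  obtain ⟨M, hM⟩ := (isCompact_closedBall p r).exists_bound_of_continuousOn hg.continuousOn
  have hest : ∀ h ∈ closedBall (0 : ℂ) (r / 2), h ≠ 0 → ∀ x ∈ closedBall p.1 r,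
      ‖pdy g (x, p.2) - h⁻¹ * (g (x, p.2 + h) - g (x, p.2))‖ ≤ 4 * M / r ^ 2 * ‖h‖ := by
    intro h hh h0 x hx
    have hslice : DifferentiableOn ℂ (fun y => g (x, y)) (closedBall p.2 r) :=
      hg.comp (differentiableOn_const x |>.prodMk differentiableOn_id)
        fun y hy => Prod.mk_mem_closedBall hx hy
    have := norm_dslope_sub_deriv_le hr hslice
      (fun y hy => hM _ (Prod.mk_mem_closedBall hx (sphere_subset_closedBall hy)))
      (z := p.2 + h) (by simpa [dist_eq_norm] using hh)
    rwa [dslope_of_ne _ (by simpa using h0), slope_def_module, add_sub_cancel_left, norm_sub_rev]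
      at this
  rw [Metric.tendstoUniformlyOn_iff]
  intro ε hε
  have hsmall : ∀ᶠ h in 𝓝 (0 : ℂ), 4 * M / r ^ 2 * ‖h‖ < ε := by
    refine (Continuous.tendsto (by fun_prop) 0).eventually_lt_const ?_
    simpa using hε
  filter_upwards [nhdsWithin_le_nhds hsmall,
    nhdsWithin_le_nhds (closedBall_mem_nhds 0 (half_pos hr)), self_mem_nhdsWithin]
    with h hε' hh h0 x hx
  rw [dist_eq_norm]
  exact (hest h hh h0 x hx).trans_lt hε'

theorem differentiableOn_slope_snd (hg : DifferentiableOn ℂ g (closedBall p r)) {h : ℂ}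
    (hh : ‖h‖ ≤ r) :
    DifferentiableOn ℂ (fun x => h⁻¹ * (g (x, p.2 + h) - g (x, p.2))) (closedBall p.1 r) := by
  have hslice : ∀ y ∈ closedBall p.2 r,
      DifferentiableOn ℂ (fun x => g (x, y)) (closedBall p.1 r) := fun y hy =>
    hg.comp (differentiableOn_id.prodMk (differentiableOn_const y))
      fun x hx => Prod.mk_mem_closedBall hx hy
  refine ((hslice _ ?_).sub (hslice _ ?_)).const_mul _
  · simpa [dist_eq_norm] using hh
  · exact mem_closedBall_self ((norm_nonneg h).trans hh)

theorem differentiableOn_pdy_fst_and_hasDerivAt_pdx_snd (hr : 0 < r)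
    (hg : DifferentiableOn ℂ g (closedBall p r)) :
    DifferentiableOn ℂ (fun x => pdy g (x, p.2)) (ball p.1 r) ∧
      HasDerivAt (fun y => pdx g (p.1, y)) (pdx (pdy g) p) p.2 := by
  have hsmall : ∀ᶠ h in 𝓝[≠] (0 : ℂ), ‖h‖ < r :=
    nhdsWithin_le_nhds ((continuous_norm.tendsto' 0 0 norm_zero).eventually_lt_const hr)
  have hdiff : ∀ᶠ h in 𝓝[≠] (0 : ℂ),
      DifferentiableOn ℂ (fun x => h⁻¹ * (g (x, p.2 + h) - g (x, p.2))) (ball p.1 r) := by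
    filter_upwards [hsmall] with h hh
    exact (differentiableOn_slope_snd hg hh.le).mono ball_subset_closedBall
  have hlim := ((tendstoUniformlyOn_slope_snd hr hg).mono ball_subset_closedBall
    ).tendstoLocallyUniformlyOn
  refine ⟨hlim.differentiableOn hdiff isOpen_ball, ?_⟩
  rw [hasDerivAt_iff_tendsto_slope_zero]
  refine ((hlim.deriv hdiff isOpen_ball).tendsto_at (mem_ball_self hr)).congr' ?_
  filter_upwards [hsmall] with h hh
  have hat : ∀ y ∈ ball p.2 r, DifferentiableAt ℂ (fun x => g (x, y)) p.1 := fun y hy =>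
    DifferentiableAt.comp_mk_fst (p := (p.1, y)) (hg.differentiableAt
      (closedBall_mem_nhds_of_mem (by rw [← ball_prod_same]; exact ⟨mem_ball_self hr, hy⟩)))
  have h1 := hat (p.2 + h) (by simpa [dist_eq_norm] using hh)
  have h0 := hat p.2 (mem_ball_self hr)
  rw [Function.comp_apply, deriv_const_mul _ (h1.fun_sub h0), deriv_fun_sub h1 h0, smul_eq_mul]
  rfl

end MixedPartials

section Calculus

variable {g u : ℂ × ℂ → ℂ} {p : ℂ × ℂ}

theorem pdx_add (hg : DifferentiableAt ℂ (fun t => g (t, p.2)) p.1)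
    (hu : DifferentiableAt ℂ (fun t => u (t, p.2)) p.1) :
    pdx (fun q => g q + u q) p = pdx g p + pdx u p :=
  deriv_fun_add hg hu

theorem pdx_mul (hg : DifferentiableAt ℂ (fun t => g (t, p.2)) p.1)
    (hu : DifferentiableAt ℂ (fun t => u (t, p.2)) p.1) :
    pdx (fun q => g q * u q) p = pdx g p * u p + g p * pdx u p :=
  deriv_fun_mul hg hu

theorem pdy_mul (hg : DifferentiableAt ℂ (fun t => g (p.1, t)) p.2)
    (hu : DifferentiableAt ℂ (fun t => u (p.1, t)) p.2) :
    pdy (fun q => g q * u q) p = pdy g p * u p + g p * pdy u p :=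
  deriv_fun_mul hg hu

theorem pdx_div (hg : DifferentiableAt ℂ (fun t => g (t, p.2)) p.1)
    (hu : DifferentiableAt ℂ (fun t => u (t, p.2)) p.1) (hu0 : u p ≠ 0) :
    pdx (fun q => g q / u q) p = (pdx g p * u p - g p * pdx u p) / u p ^ 2 :=
  deriv_fun_div hg hu hu0

theorem pdy_neg : pdy (fun q => -g q) p = -pdy g p :=
  deriv.fun_neg

end Calculus

namespace DifferentiableOn

variable {Ω : Set (ℂ × ℂ)} {g u : ℂ × ℂ → ℂ} {p : ℂ × ℂ}

theorem differentiableAt_fst (hΩ : IsOpen Ω) (hg : DifferentiableOn ℂ g Ω) (hp : p ∈ Ω) :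
    DifferentiableAt ℂ (fun t => g (t, p.2)) p.1 :=
  (hg.differentiableAt (hΩ.mem_nhds hp)).comp_mk_fst

theorem differentiableAt_snd (hΩ : IsOpen Ω) (hg : DifferentiableOn ℂ g Ω) (hp : p ∈ Ω) :
    DifferentiableAt ℂ (fun t => g (p.1, t)) p.2 :=
  (hg.differentiableAt (hΩ.mem_nhds hp)).comp_mk_snd

theorem differentiableAt_pdy_fst (hΩ : IsOpen Ω) (hg : DifferentiableOn ℂ g Ω) (hp : p ∈ Ω) :
    DifferentiableAt ℂ (fun t => pdy g (t, p.2)) p.1 := by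
  obtain ⟨r, hr, hrΩ⟩ := nhds_basis_closedBall.mem_iff.1 (hΩ.mem_nhds hp)
  exact (differentiableOn_pdy_fst_and_hasDerivAt_pdx_snd hr (hg.mono hrΩ)).1.differentiableAt
    (isOpen_ball.mem_nhds (mem_ball_self hr))

theorem pdy_pdx (hΩ : IsOpen Ω) (hg : DifferentiableOn ℂ g Ω) (hp : p ∈ Ω) :
    pdy (pdx g) p = pdx (pdy g) p := by
  obtain ⟨r, hr, hrΩ⟩ := nhds_basis_closedBall.mem_iff.1 (hΩ.mem_nhds hp)
  exact (differentiableOn_pdy_fst_and_hasDerivAt_pdx_snd hr (hg.mono hrΩ)).2.deriv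

theorem pdx_pdy_mul (hΩ : IsOpen Ω) (hg : DifferentiableOn ℂ g Ω)
    (hu : DifferentiableOn ℂ u Ω) (hp : p ∈ Ω) :
    pdx (pdy (fun q => g q * u q)) p = pdx (pdy g) p * u p + pdy g p * pdx u p
      + pdx g p * pdy u p + g p * pdx (pdy u) p := by
  have hy : pdy (fun q => g q * u q) =ᶠ[𝓝 p] fun q => pdy g q * u q + g q * pdy u q :=
    eventuallyEq_of_mem (hΩ.mem_nhds hp) fun q hq =>
      pdy_mul (hg.differentiableAt_snd hΩ hq) (hu.differentiableAt_snd hΩ hq)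
  have hgx := hg.differentiableAt_fst hΩ hp
  have hux := hu.differentiableAt_fst hΩ hp
  have hgyx := hg.differentiableAt_pdy_fst hΩ hp
  have huyx := hu.differentiableAt_pdy_fst hΩ hp
  rw [hy.pdx_eq, pdx_add (hgyx.mul hux) (hgx.mul huyx), pdx_mul hgyx hux, pdx_mul hgx huyx]
  ring

theorem pdx_pdy_of_pdx_eq_mul {m : ℂ × ℂ → ℂ} (hΩ : IsOpen Ω) (hg : DifferentiableOn ℂ g Ω)
    (hm : DifferentiableOn ℂ m Ω) (hgm : ∀ q ∈ Ω, pdx g q = m q * g q) (hp : p ∈ Ω) :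
    pdx (pdy g) p = pdy m p * g p + m p * pdy g p := by
  rw [← hg.pdy_pdx hΩ hp, (eventuallyEq_of_mem (hΩ.mem_nhds hp) hgm).pdy_eq,
    pdy_mul (hm.differentiableAt_snd hΩ hp) (hg.differentiableAt_snd hΩ hp)]

end DifferentiableOn

theorem normal_form_of_hyperbolic_operator_general
    (Ω : Set (ℂ × ℂ)) (hΩ : IsOpen Ω)
    (a b c f : ℂ × ℂ → ℂ)
    (ha : DifferentiableOn ℂ a Ω) (hb : DifferentiableOn ℂ b Ω)
    (hf : DifferentiableOn ℂ f Ω)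
    (hf0 : ∀ p ∈ Ω, f p ≠ 0)
    (hfb : ∀ p ∈ Ω, pdx f p / f p = - b p)
    (a' c' h k : ℂ × ℂ → ℂ)
    (ha' : a' = fun p => a p + pdy f p / f p)
    (hc' : c' = fun p => c p + a p * (pdx f p / f p) + b p * (pdy f p / f p)
        + pdx (pdy f) p / f p)
    (hh : h = fun p => pdx a p + a p * b p - c p)
    (hk : k = fun p => pdy b p + a p * b p - c p) :
    (∀ u : ℂ × ℂ → ℂ, DifferentiableOn ℂ u Ω → ∀ p ∈ Ω,
      (1 / f p) * (pdx (pdy (fun q => f q * u q)) p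
        + a p * pdx (fun q => f q * u q) p
        + b p * pdy (fun q => f q * u q) p
        + c p * (f p * u p))
      = pdx (pdy u) p + a' p * pdx u p + c' p * u p) ∧
    (∀ p ∈ Ω, pdx a' p = h p - k p) ∧
    (∀ p ∈ Ω, c' p = - k p) := by
  subst ha' hc' hh hk
  have hfx : ∀ p ∈ Ω, pdx f p = -b p * f p := fun p hp =>
    (div_eq_iff (hf0 p hp)).1 (hfb p hp)
  have hfxy : ∀ p ∈ Ω, pdx (pdy f) p = -(pdy b p * f p + b p * pdy f p) := fun p hp => by
    rw [hf.pdx_pdy_of_pdx_eq_mul (m := fun q => -b q) hΩ hb.neg hfx hp, pdy_neg]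
    ring
  refine ⟨fun u hu p hp => ?_, fun p hp => ?_, fun p hp => ?_⟩ <;> beta_reduce
  · have hfx' := hf.differentiableAt_fst hΩ hp
    have hfy' := hf.differentiableAt_snd hΩ hp
    rw [hf.pdx_pdy_mul hΩ hu hp, pdx_mul hfx' (hu.differentiableAt_fst hΩ hp),
      pdy_mul hfy' (hu.differentiableAt_snd hΩ hp), hfx p hp, hfxy p hp]
    field_simp [hf0 p hp]
    ring
  · have hfx' := hf.differentiableAt_fst hΩ hp
    rw [pdx_add (ha.differentiableAt_fst hΩ hp)
        ((hf.differentiableAt_pdy_fst hΩ hp).div hfx' (hf0 p hp)),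
      pdx_div (hf.differentiableAt_pdy_fst hΩ hp) hfx' (hf0 p hp), hfx p hp, hfxy p hp]
    field_simp [hf0 p hp]
    ring
  · rw [hfb p hp, hfxy p hp]
    field_simp [hf0 p hp]
    ring

theorem normal_form_of_hyperbolic_operator
    (Ω : Set (ℂ × ℂ)) (hΩ : IsOpen Ω) (hne : Ω.Nonempty)
    (a b c f : ℂ × ℂ → ℂ)
    (ha : DifferentiableOn ℂ a Ω) (hb : DifferentiableOn ℂ b Ω)
    (hc : DifferentiableOn ℂ c Ω) (hf : DifferentiableOn ℂ f Ω)
    (hf0 : ∀ p ∈ Ω, f p ≠ 0)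
    (hfb : ∀ p ∈ Ω, pdx f p / f p = - b p)
    (a' c' h k : ℂ × ℂ → ℂ)
    (ha' : a' = fun p => a p + pdy f p / f p)
    (hc' : c' = fun p => c p + a p * (pdx f p / f p) + b p * (pdy f p / f p)
        + pdx (pdy f) p / f p)
    (hh : h = fun p => pdx a p + a p * b p - c p)
    (hk : k = fun p => pdy b p + a p * b p - c p) :
    (∀ u : ℂ × ℂ → ℂ, DifferentiableOn ℂ u Ω → ∀ p ∈ Ω,
      (1 / f p) * (pdx (pdy (fun q => f q * u q)) p
        + a p * pdx (fun q => f q * u q) p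
        + b p * pdy (fun q => f q * u q) p
        + c p * (f p * u p))
      = pdx (pdy u) p + a' p * pdx u p + c' p * u p) ∧
    (∀ p ∈ Ω, pdx a' p = h p - k p) ∧
    (∀ p ∈ Ω, c' p = - k p) :=
  normal_form_of_hyperbolic_operator_general Ω hΩ a b c f ha hb hf hf0 hfb a' c' h k ha' hc' hh hk
end

section
/- Let N ≥ 2 and let u be a holomorphic function on the space of 2×N complex matrices z = (z_{a,p})_{a∈{0,1}, 0≤p<N}. Fix two distinct column indices α ≠ β in {0,…,N−1} and define (Lu)(z) = z_{0,α}·(∂_{0,β}u)(z) + z_{1,α}·(∂_{1,β}u)(z). If □_{p,q}u = 0 for all p, q ∈ {0,…,N−1}, then □_{p,q}(Lu) = 0 for all p, q ∈ {0,…,N−1}. -/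
/-- Partial derivative of a function of a 2×N complex matrix (viewed as
`Fin 2 → ι → ℂ`) with respect to the entry in row `a`, column `q`. -/
noncomputable def pd {ι : Type} [DecidableEq ι] (a : Fin 2) (q : ι)
    (u : (Fin 2 → ι → ℂ) → ℂ) : (Fin 2 → ι → ℂ) → ℂ :=
  fun z => deriv (fun s : ℂ => u (fun a' q' => z a' q' + if a' = a ∧ q' = q then s else 0)) 0

/-- The operator `□_{p,q} = ∂_{0,p}∂_{1,q} − ∂_{1,p}∂_{0,q}` of the Gelfand system. -/
noncomputable def box {ι : Type} [DecidableEq ι] (p q : ι)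
    (u : (Fin 2 → ι → ℂ) → ℂ) : (Fin 2 → ι → ℂ) → ℂ :=
  fun z => pd 0 p (pd 1 q u) z - pd 1 p (pd 0 q u) z

/-!
The contiguity operator `L = z_{0,α} ∂_{0,β} + z_{1,α} ∂_{1,β}` satisfies
`[∂_{a,r}, L] = δ_{α,r} ∂_{a,β}`, hence `[□_{p,q}, L] = δ_{α,p} □_{β,q} + δ_{α,q} □_{p,β}`, so `L`
maps common solutions of all `□_{p,q} u = 0` to common solutions.

The commutation relations need the symmetry of second derivatives, i.e. that an entire function
on `ℂ^{2×N}` is smooth. By Cauchy's formula on complex lines, a directional derivative of a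
holomorphic function is a parametric circle integral of the function itself, which is again
holomorphic by differentiation under the integral sign, dominated by Cauchy's estimates.
-/

open Metric Complex Real
open scoped ContDiff

section Holomorphic

variable {E F : Type*} [NormedAddCommGroup E] [NormedSpace ℂ E]
  [NormedAddCommGroup F] [NormedSpace ℂ F] {f : E → F}

theorem DifferentiableAt.hasDerivAt_comp_add_smul {z : E} (hf : DifferentiableAt ℂ f z)
    (v : E) : HasDerivAt (fun s : ℂ => f (z + s • v)) (fderiv ℂ f z v) 0 := by
  simpa [Function.comp_def] using hf.hasFDerivAt.comp_hasDerivAt_of_eq 0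
    (((hasDerivAt_id (0 : ℂ)).smul_const v).const_add z) (by simp)

theorem norm_fderiv_le_of_forall_mem_closedBall_norm_le
    (hf : Differentiable ℂ f) {w : E} {R C : ℝ} (hR : 0 < R)
    (hC : ∀ y ∈ closedBall w R, ‖f y‖ ≤ C) : ‖fderiv ℂ f w‖ ≤ C / R := by
  have hC0 : 0 ≤ C := (norm_nonneg _).trans (hC w (mem_closedBall_self hR.le))
  refine ContinuousLinearMap.opNorm_le_bound _ (by positivity) fun x => ?_
  rcases eq_or_ne x 0 with rfl | hx
  · simp
  have hx' : 0 < ‖x‖ := norm_pos_iff.2 hx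
  have hslice : Differentiable ℂ fun s : ℂ => f (w + s • x) :=
    hf.comp ((differentiable_id.smul_const x).const_add w)
  have hsphere : ∀ s ∈ sphere (0 : ℂ) (R / ‖x‖), ‖f (w + s • x)‖ ≤ C := by
    intro s hs
    refine hC _ (mem_closedBall_iff_norm.2 ?_)
    rw [mem_sphere_zero_iff_norm] at hs
    rw [add_sub_cancel_left, norm_smul, hs, div_mul_cancel₀ _ hx'.ne']
  calc ‖fderiv ℂ f w x‖ = ‖deriv (fun s : ℂ => f (w + s • x)) 0‖ := by
        rw [((hf w).hasDerivAt_comp_add_smul x).deriv]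
    _ ≤ C / (R / ‖x‖) :=
        norm_deriv_le_of_forall_mem_sphere_norm_le (by positivity) hslice.diffContOnCl hsphere
    _ = C / R * ‖x‖ := by field_simp

theorem exists_bound_norm_fderiv_of_isCompact [ProperSpace E]
    (hf : Differentiable ℂ f) {K : Set E} (hK : IsCompact K) :
    ∃ C, ∀ w ∈ K, ‖fderiv ℂ f w‖ ≤ C := by
  obtain ⟨C, hC⟩ := (hK.cthickening (r := 1)).exists_bound_of_continuousOn
    hf.continuous.continuousOn
  refine ⟨C, fun w hw => ?_⟩
  simpa using norm_fderiv_le_of_forall_mem_closedBall_norm_le hf one_pos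
    fun y hy => hC y (closedBall_subset_cthickening hw 1 hy)

theorem Differentiable.differentiable_intervalIntegral_smul_comp_add [FiniteDimensional ℂ E]
    [CompleteSpace F] [SecondCountableTopology F] (hf : Differentiable ℂ f) {k : ℝ → ℂ}
    (hk : Continuous k) {γ : ℝ → E} (hγ : Continuous γ) (a b : ℝ) :
    Differentiable ℂ fun x => ∫ θ in a..b, k θ • f (x + γ θ) := by
  borelize E
  intro x₀
  obtain ⟨Ck, hCk⟩ :=
    (isCompact_uIcc (a := a) (b := b)).exists_bound_of_continuousOn hk.continuousOn
  have hCk0 : 0 ≤ Ck := (norm_nonneg _).trans (hCk a Set.left_mem_uIcc)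
  have hK : IsCompact ((fun p : E × ℝ => p.1 + γ p.2) '' closedBall x₀ 1 ×ˢ Set.uIcc a b) :=
    ((isCompact_closedBall x₀ 1).prod isCompact_uIcc).image (by fun_prop)
  obtain ⟨Cf, hCf⟩ := exists_bound_norm_fderiv_of_isCompact hf hK
  have hcont : ∀ x, Continuous fun θ => k θ • f (x + γ θ) := fun x =>
    hk.smul (hf.continuous.comp (continuous_const.add hγ))
  refine (intervalIntegral.hasFDerivAt_integral_of_dominated_of_fderiv_le
    (F' := fun x θ => k θ • fderiv ℂ f (x + γ θ)) (bound := fun _ => Ck * Cf)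
    (ball_mem_nhds x₀ one_pos) (Filter.Eventually.of_forall fun x => (hcont x).aestronglyMeasurable)
    ((hcont x₀).intervalIntegrable _ _) ?_ ?_ intervalIntegrable_const ?_).differentiableAt
  · exact hk.aestronglyMeasurable.smul
      ((measurable_fderiv ℂ f).comp (continuous_const.add hγ).measurable).aestronglyMeasurable
  · refine MeasureTheory.ae_of_all _ fun θ hθ x hx => ?_
    rw [norm_smul]
    exact mul_le_mul (hCk θ (Set.uIoc_subset_uIcc hθ))
      (hCf _ ⟨(x, θ), ⟨ball_subset_closedBall hx, Set.uIoc_subset_uIcc hθ⟩, rfl⟩)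
      (norm_nonneg _) hCk0
  · refine MeasureTheory.ae_of_all _ fun θ _ x _ => ?_
    exact (((hf _).hasFDerivAt.comp x ((hasFDerivAt_id x).add_const (γ θ))).const_smul (k θ))

theorem fderiv_apply_eq_circleIntegral [CompleteSpace F] (hf : Differentiable ℂ f) (z v : E) :
    fderiv ℂ f z v = (2 * π * I : ℂ)⁻¹ • ∮ s in C(0, 1), (s ^ 2)⁻¹ • f (z + s • v) := by
  have hslice : Differentiable ℂ fun s : ℂ => f (z + s • v) :=
    hf.comp ((differentiable_id.smul_const v).const_add z)
  have := two_pi_I_inv_smul_circleIntegral_sub_sq_inv_smul_of_differentiable (c := 0) (R := 1)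
    isOpen_univ (Set.subset_univ _) hslice.differentiableOn (mem_ball_self one_pos)
  rw [((hf z).hasDerivAt_comp_add_smul v).deriv] at this
  simpa using this.symm

theorem Differentiable.differentiable_fderiv_apply [FiniteDimensional ℂ E] [CompleteSpace F]
    [SecondCountableTopology F] (hf : Differentiable ℂ f) (v : E) :
    Differentiable ℂ fun z => fderiv ℂ f z v := by
  have hk : Continuous fun θ => circleMap 0 1 θ * I * (circleMap 0 1 θ ^ 2)⁻¹ :=
    ((continuous_circleMap 0 1).mul continuous_const).mul
      (((continuous_circleMap 0 1).pow 2).inv₀ fun _ =>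
        pow_ne_zero 2 (circleMap_ne_center one_ne_zero))
  simp_rw [fderiv_apply_eq_circleIntegral hf, circleIntegral, deriv_circleMap, smul_smul]
  exact (hf.differentiable_intervalIntegral_smul_comp_add hk
    ((continuous_circleMap 0 1).smul continuous_const) _ _).const_smul _

theorem Differentiable.contDiff_of_finiteDimensional [FiniteDimensional ℂ E] [CompleteSpace F]
    [SecondCountableTopology F] (hf : Differentiable ℂ f) : ContDiff ℂ ∞ f := by
  suffices h : ∀ n : ℕ, ∀ g : E → F, Differentiable ℂ g → ContDiff ℂ n g from
    contDiff_infty.2 fun n => h n f hf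
  intro n
  induction n with
  | zero => exact fun g hg => contDiff_zero.2 hg.continuous
  | succ n ih =>
    intro g hg
    rw [Nat.cast_succ, contDiff_succ_iff_fderiv_apply]
    exact ⟨hg, by simp, fun v => ih _ (hg.differentiable_fderiv_apply v)⟩

end Holomorphic

section GelfandSystem

variable {ι : Type} [DecidableEq ι] {u v : (Fin 2 → ι → ℂ) → ℂ}

abbrev matrixUnit (a : Fin 2) (q : ι) : Fin 2 → ι → ℂ := Pi.single a (Pi.single q 1)

theorem pd_zero (a : Fin 2) (q : ι) :
    pd a q (0 : (Fin 2 → ι → ℂ) → ℂ) = 0 := by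
  funext z
  simp [pd]

theorem box_eq_sub (p q : ι) :
    box p q u = pd 0 p (pd 1 q u) - pd 1 p (pd 0 q u) := rfl

/-- The contiguity operator `L_{ε^{(α)} − ε^{(β)}}`. -/
noncomputable def contiguity (α β : ι) (u : (Fin 2 → ι → ℂ) → ℂ) : (Fin 2 → ι → ℂ) → ℂ :=
  fun z => z 0 α * pd 0 β u z + z 1 α * pd 1 β u z

theorem contiguity_zero (α β : ι) : contiguity α β (0 : (Fin 2 → ι → ℂ) → ℂ) = 0 := by
  funext z
  simp [contiguity, pd_zero]

variable [Fintype ι]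

theorem pd_eq_fderiv {z : Fin 2 → ι → ℂ} (hu : DifferentiableAt ℂ u z) (a : Fin 2) (q : ι) :
    pd a q u z = fderiv ℂ u z (matrixUnit a q) := by
  have hline : ∀ s : ℂ, (fun a' q' => z a' q' + if a' = a ∧ q' = q then s else 0)
      = z + s • matrixUnit a q := by
    intro s
    funext a' q'
    by_cases ha : a' = a <;> by_cases hq : q' = q <;> simp [ha, hq]
  simp only [pd, hline]
  exact (hu.hasDerivAt_comp_add_smul _).deriv

theorem pd_add (hu : Differentiable ℂ u) (hv : Differentiable ℂ v) (a : Fin 2) (q : ι) :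
    pd a q (u + v) = pd a q u + pd a q v := by
  funext z
  simp [pd_eq_fderiv ((hu z).add (hv z)), pd_eq_fderiv (hu z), pd_eq_fderiv (hv z),
    fderiv_add (hu z) (hv z)]

theorem pd_sub (hu : Differentiable ℂ u) (hv : Differentiable ℂ v) (a : Fin 2) (q : ι) :
    pd a q (u - v) = pd a q u - pd a q v := by
  funext z
  simp [pd_eq_fderiv ((hu z).sub (hv z)), pd_eq_fderiv (hu z), pd_eq_fderiv (hv z),
    fderiv_sub (hu z) (hv z)]

theorem pd_const_smul (hu : Differentiable ℂ u) (c : ℂ) (a : Fin 2) (q : ι) :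
    pd a q (c • u) = c • pd a q u := by
  funext z
  simp [pd_eq_fderiv ((hu z).const_smul c), pd_eq_fderiv (hu z), fderiv_const_smul (hu z)]

theorem pd_coord_mul (hv : Differentiable ℂ v) (a b : Fin 2) (q r : ι) (z : Fin 2 → ι → ℂ) :
    pd a q (fun w => w b r * v w) z = z b r * pd a q v z + if b = a ∧ r = q then v z else 0 := by
  let coord : (Fin 2 → ι → ℂ) →L[ℂ] ℂ :=
    (ContinuousLinearMap.proj (R := ℂ) (φ := fun _ : ι => ℂ) r).comp
      (ContinuousLinearMap.proj b)
  have hcoord : HasFDerivAt (fun w : Fin 2 → ι → ℂ => w b r) coord z := coord.hasFDerivAt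
  rw [pd_eq_fderiv (hcoord.differentiableAt.fun_mul (hv z)),
    (hcoord.fun_mul (hv z).hasFDerivAt).fderiv, pd_eq_fderiv (hv z)]
  by_cases hb : b = a <;> by_cases hr : r = q <;> simp [coord, hb, hr]

theorem differentiable_pd (hu : Differentiable ℂ u) (a : Fin 2) (q : ι) :
    Differentiable ℂ (pd a q u) := by
  simpa only [← funext fun z => pd_eq_fderiv (hu z) a q] using
    hu.differentiable_fderiv_apply (matrixUnit a q)

theorem pd_comm (hu : Differentiable ℂ u) (a b : Fin 2) (p q : ι) :
    pd a p (pd b q u) = pd b q (pd a p u) := by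
  have hsmooth := hu.contDiff_of_finiteDimensional
  have hu' : Differentiable ℂ (fderiv ℂ u) :=
    (hsmooth.fderiv_right (m := 1) (by decide)).differentiable (by norm_num)
  have hsecond : ∀ a p b q z, pd a p (pd b q u) z
      = fderiv ℂ (fderiv ℂ u) z (matrixUnit a p) (matrixUnit b q) := by
    intro a p b q z
    rw [funext fun z => pd_eq_fderiv (hu z) b q,
      pd_eq_fderiv (hu.differentiable_fderiv_apply _ z), fderiv_clm_apply (hu' z)
        (differentiableAt_const _)]
    simp
  funext z
  rw [hsecond, hsecond,
    (hsmooth.contDiffAt.isSymmSndFDerivAt (by simpa using ENat.LEInfty.out)).eq]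

theorem contiguity_sub (hu : Differentiable ℂ u) (hv : Differentiable ℂ v) (α β : ι) :
    contiguity α β (u - v) = contiguity α β u - contiguity α β v := by
  funext z
  simp only [contiguity, pd_sub hu hv, Pi.sub_apply]
  ring

theorem differentiable_contiguity (hu : Differentiable ℂ u) (α β : ι) :
    Differentiable ℂ (contiguity α β u) := by
  have h₀ := differentiable_pd hu 0 β
  have h₁ := differentiable_pd hu 1 β
  unfold contiguity
  fun_prop

theorem pd_contiguity (hu : Differentiable ℂ u) (α β : ι) (a : Fin 2) (r : ι) :
    pd a r (contiguity α β u) =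
      contiguity α β (pd a r u) + (if α = r then 1 else 0 : ℂ) • pd a β u := by
  have hsplit : contiguity α β u =
      (fun w => w 0 α * pd 0 β u w) + (fun w => w 1 α * pd 1 β u w) := rfl
  have h₀ := differentiable_pd hu 0 β
  have h₁ := differentiable_pd hu 1 β
  funext z
  rw [hsplit, pd_add (by fun_prop) (by fun_prop), Pi.add_apply, pd_coord_mul h₀, pd_coord_mul h₁,
    pd_comm hu a 0, pd_comm hu a 1]
  fin_cases a <;> by_cases h : α = r <;> simp [contiguity, h] <;> ring

theorem box_contiguity (hu : Differentiable ℂ u) (α β p q : ι) :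
    box p q (contiguity α β u) = contiguity α β (box p q u) +
      (if α = p then 1 else 0 : ℂ) • box β q u + (if α = q then 1 else 0 : ℂ) • box p β u := by
  have hd : ∀ a r, Differentiable ℂ (pd a r u) := differentiable_pd hu
  rw [box_eq_sub, pd_contiguity hu _ _ 1 q, pd_contiguity hu _ _ 0 q,
    pd_add (differentiable_contiguity (hd 1 q) _ _) ((hd 1 β).const_smul _),
    pd_add (differentiable_contiguity (hd 0 q) _ _) ((hd 0 β).const_smul _),
    pd_const_smul (hd 1 β), pd_const_smul (hd 0 β), pd_contiguity (hd 1 q), pd_contiguity (hd 0 q),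
    box_eq_sub, contiguity_sub (differentiable_pd (hd 1 q) 0 p) (differentiable_pd (hd 0 q) 1 p),
    box_eq_sub β q, box_eq_sub p β, smul_sub, smul_sub]
  abel

end GelfandSystem

theorem contiguity_operator_preserves_gelfand_solutions_general
    (N : ℕ)
    (u : (Fin 2 → Fin N → ℂ) → ℂ) (hu : Differentiable ℂ u)
    (α β : Fin N)
    (L : (Fin 2 → Fin N → ℂ) → ℂ)
    (hL : ∀ z, L z = z 0 α * pd 0 β u z + z 1 α * pd 1 β u z)
    (hbox : ∀ p q : Fin N, ∀ z, box p q u z = 0) :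
    ∀ p q : Fin N, ∀ z, box p q L z = 0 := by
  have hL' : L = contiguity α β u := funext hL
  have hbox' : ∀ p q, box p q u = 0 := fun p q => funext (hbox p q)
  intro p q z
  rw [hL', box_contiguity hu, hbox', hbox', hbox', contiguity_zero]
  simp only [smul_zero, add_zero, Pi.zero_apply]

theorem contiguity_operator_preserves_gelfand_solutions
    (N : ℕ) (hN : 2 ≤ N)
    (u : (Fin 2 → Fin N → ℂ) → ℂ) (hu : Differentiable ℂ u)
    (α β : Fin N) (hαβ : α ≠ β)
    (L : (Fin 2 → Fin N → ℂ) → ℂ)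
    (hL : ∀ z, L z = z 0 α * pd 0 β u z + z 1 α * pd 1 β u z)
    (hbox : ∀ p q : Fin N, ∀ z, box p q u z = 0) :
    ∀ p q : Fin N, ∀ z, box p q L z = 0 :=
  contiguity_operator_preserves_gelfand_solutions_general N u hu α β L hL hbox
end

section
/- Let λ = (n_1,…,n_ℓ) be a partition of N and let z = (z^{(1)},…,z^{(ℓ)}) be a 2×N complex matrix written in blocks z^{(j)} of size 2×n_j with entries z^{(j)}_{a,k} (a ∈ {0,1}, 0 ≤ k < n_j), and assume z^{(j)}_{1,0} ≠ 0 for every j. Then there exists a unique h ∈ H_λ (block diagonal with invertible upper-triangular Toeplitz blocks h^{(j)}) such that for every j the second row of z^{(j)}·h^{(j)} equals (1,0,…,0); it is given by h^{(j)} = (Σ_{0≤k<n_j} z^{(j)}_{1,k} Λ^k)⁻¹, and then the first row of z^{(j)}·h^{(j)} equals (z^{(j)}_{0,0},…,z^{(j)}_{0,n_j−1})·(Σ_{0≤k<n_j} z^{(j)}_{1,k} Λ^k)⁻¹. -/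
/-!
Within one block, let `c` be the second row of `z^{(j)}` and `Z = Σ c_k Λ^k`, the upper-triangular
Toeplitz matrix with first row `c`; the second row of `z^{(j)} h` is the first row of `Z h`.
A matrix commuting with `Λ` is determined by its first row, since row `a + 1` of `Λ M` is row `a`
of `M Λ` shifted one step to the right. Toeplitz matrices commute with `Λ`, hence so does `Z⁻¹`
(`det Z = c_0 ^ n_j ≠ 0`), which is therefore Toeplitz with nonzero diagonal; and `Z h` has first
row `(1, 0, …, 0)` exactly when `Z h = 1`, i.e. `h = Z⁻¹`.
-/

/-- Column index set for a 2×N matrix written in blocks according to the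
partition `λ = (n 0, …, n (ℓ-1))`. -/
abbrev Idx (ℓ : ℕ) (n : Fin ℓ → ℕ) : Type := (j : Fin ℓ) × Fin (n j)

/-- The block-diagonal upper-triangular Toeplitz matrix with block coefficients `hc`. -/
def toep (ℓ : ℕ) (n : Fin ℓ → ℕ) (hc : (m : Fin ℓ) → Fin (n m) → ℂ) :
    Idx ℓ n → Idx ℓ n → ℂ :=
  fun p q =>
    if h : p.1 = q.1 then
      if (p.2 : ℕ) ≤ (q.2 : ℕ) then
        hc p.1 ⟨(q.2 : ℕ) - (p.2 : ℕ), by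
          have h1 := q.2.isLt; have h2 : n p.1 = n q.1 := congrArg n h; omega⟩
      else 0
    else 0

/-- The shift matrix `Λ` of size `m`, with `Λ_{a,b} = δ_{a+1,b}`. -/
def shiftM (m : ℕ) : Matrix (Fin m) (Fin m) ℂ :=
  Matrix.of fun a b => if (a : ℕ) + 1 = (b : ℕ) then 1 else 0

open Matrix

lemma Matrix.commute_nonsing_inv_left {ι α : Type*} [Fintype ι] [DecidableEq ι] [CommRing α]
    {A B : Matrix ι ι α} (h : Commute A B) : Commute A⁻¹ B := by
  by_cases hA : IsUnit A
  · obtain ⟨u, rfl⟩ := hA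
    rw [← coe_units_inv]
    exact h.units_inv_left
  · rw [nonsing_inv_eq_ringInverse, Ring.inverse_non_unit _ hA]
    exact Commute.zero_left B

def toeplitzUT (m : ℕ) (c : Fin m → ℂ) : Matrix (Fin m) (Fin m) ℂ :=
  Matrix.of fun a b => if (a : ℕ) ≤ b then c ⟨b - a, by omega⟩ else 0

section Shift

variable {m : ℕ}

lemma shiftM_mul_apply (M : Matrix (Fin m) (Fin m) ℂ) (a b : Fin m) :
    (shiftM m * M) a b = if h : (a : ℕ) + 1 < m then M ⟨a + 1, h⟩ b else 0 := by
  rw [mul_apply]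
  split_ifs with h
  · rw [Finset.sum_eq_single_of_mem ⟨a + 1, h⟩ (Finset.mem_univ _)]
    · simp [shiftM]
    · intro t _ ht
      simp only [shiftM, of_apply, ite_mul, one_mul, zero_mul, ite_eq_right_iff]
      exact fun h' => absurd (Fin.ext h'.symm) ht
  · refine Finset.sum_eq_zero fun t _ => ?_
    simp only [shiftM, of_apply, ite_mul, one_mul, zero_mul, ite_eq_right_iff]
    omega

lemma mul_shiftM_apply (M : Matrix (Fin m) (Fin m) ℂ) (a b : Fin m) :
    (M * shiftM m) a b = if h : 1 ≤ (b : ℕ) then M a ⟨b - 1, by omega⟩ else 0 := by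
  rw [mul_apply]
  split_ifs with h
  · rw [Finset.sum_eq_single_of_mem ⟨b - 1, by omega⟩ (Finset.mem_univ _)]
    · simp only [shiftM, of_apply, mul_ite, mul_one, mul_zero]
      exact if_pos (by omega)
    · intro t _ ht
      simp only [shiftM, of_apply, mul_ite, mul_one, mul_zero, ite_eq_right_iff]
      exact fun h' => absurd (Fin.ext (by simp only; omega)) ht
  · refine Finset.sum_eq_zero fun t _ => ?_
    simp only [shiftM, of_apply, mul_ite, mul_one, mul_zero, ite_eq_right_iff]
    omega

lemma shiftM_pow_apply (k : ℕ) (a b : Fin m) :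
    (shiftM m ^ k) a b = if (a : ℕ) + k = b then 1 else 0 := by
  induction k generalizing b with
  | zero => simp [one_apply, Fin.ext_iff]
  | succ k ih =>
    rw [pow_succ, mul_shiftM_apply]
    by_cases hb : 1 ≤ (b : ℕ)
    · rw [dif_pos hb, ih]
      exact if_congr (by simp only; omega) rfl rfl
    · rw [dif_neg hb, if_neg (by omega)]

lemma sum_smul_shiftM_pow (c : Fin m → ℂ) :
    ∑ k : Fin m, c k • shiftM m ^ (k : ℕ) = toeplitzUT m c := by
  ext a b
  simp only [Matrix.sum_apply, Matrix.smul_apply, shiftM_pow_apply, smul_eq_mul, mul_ite, mul_one,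
    mul_zero, toeplitzUT, of_apply]
  split_ifs with hab
  · rw [Finset.sum_eq_single_of_mem ⟨b - a, by omega⟩ (Finset.mem_univ _),
      if_pos (by simp only; omega)]
    exact fun t _ ht => if_neg fun h => ht (Fin.ext (by simp only; omega))
  · exact Finset.sum_eq_zero fun t _ => if_neg (by omega)

lemma commute_toeplitzUT_shiftM (c : Fin m → ℂ) : Commute (toeplitzUT m c) (shiftM m) := by
  rw [← sum_smul_shiftM_pow]
  exact Commute.sum_left _ _ _ fun k _ => ((Commute.refl _).pow_left k).smul_left _

lemma ext_of_commute_shiftM (hm : 0 < m) {A B : Matrix (Fin m) (Fin m) ℂ}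
    (hA : Commute A (shiftM m)) (hB : Commute B (shiftM m)) (h₀ : A ⟨0, hm⟩ = B ⟨0, hm⟩) :
    A = B := by
  suffices ∀ (k : ℕ) (hk : k < m), A ⟨k, hk⟩ = B ⟨k, hk⟩ from
    ext fun a b => congrFun (this a a.2) b
  intro k
  induction k with
  | zero => exact fun _ => h₀
  | succ k ih =>
    intro hk
    funext b
    have hA' := congrFun (congrFun hA.eq ⟨k, by omega⟩) b
    have hB' := congrFun (congrFun hB.eq ⟨k, by omega⟩) b
    rw [mul_shiftM_apply, shiftM_mul_apply, dif_pos hk] at hA' hB'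
    rw [← hA', ← hB', ih]

end Shift

section Toeplitz

variable {m : ℕ}

lemma toeplitzUT_apply_zero_left (hm : 0 < m) (c : Fin m → ℂ) (k : Fin m) :
    toeplitzUT m c ⟨0, hm⟩ k = c k := by
  rw [toeplitzUT, of_apply, if_pos (Nat.zero_le _)]
  rfl

lemma toeplitzUT_injective : Function.Injective (toeplitzUT m) := fun c d h =>
  funext fun k => by rw [← toeplitzUT_apply_zero_left k.pos c k, h, toeplitzUT_apply_zero_left]

lemma toeplitzUT_apply_self (hm : 0 < m) (c : Fin m → ℂ) (a : Fin m) :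
    toeplitzUT m c a a = c ⟨0, hm⟩ := by
  simp [toeplitzUT]

lemma det_toeplitzUT (hm : 0 < m) (c : Fin m → ℂ) : (toeplitzUT m c).det = c ⟨0, hm⟩ ^ m := by
  rw [det_of_isUpperTriangular]
  · simp [toeplitzUT_apply_self hm]
  · intro a b hba
    exact if_neg (not_le.mpr (Fin.lt_def.mp hba))

lemma isUnit_det_toeplitzUT (hm : 0 < m) {c : Fin m → ℂ} (hc : c ⟨0, hm⟩ ≠ 0) :
    IsUnit (toeplitzUT m c).det :=
  (det_toeplitzUT hm c).symm ▸ hc.isUnit.pow m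

lemma eq_toeplitzUT_of_commute_shiftM (hm : 0 < m) {M : Matrix (Fin m) (Fin m) ℂ}
    (h : Commute M (shiftM m)) : M = toeplitzUT m (M ⟨0, hm⟩) :=
  ext_of_commute_shiftM hm h (commute_toeplitzUT_shiftM _)
    (funext fun k => (toeplitzUT_apply_zero_left hm _ k).symm)

lemma inv_toeplitzUT (hm : 0 < m) (c : Fin m → ℂ) :
    (toeplitzUT m c)⁻¹ = toeplitzUT m ((toeplitzUT m c)⁻¹ ⟨0, hm⟩) :=
  eq_toeplitzUT_of_commute_shiftM hm (commute_nonsing_inv_left (commute_toeplitzUT_shiftM c))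

lemma inv_toeplitzUT_zero_zero_ne_zero (hm : 0 < m) {c : Fin m → ℂ} (hc : c ⟨0, hm⟩ ≠ 0) :
    (toeplitzUT m c)⁻¹ ⟨0, hm⟩ ⟨0, hm⟩ ≠ 0 := by
  have hdet := isUnit_nonsing_inv_det _ (isUnit_det_toeplitzUT hm hc)
  rw [inv_toeplitzUT hm, det_toeplitzUT hm] at hdet
  intro h0
  rw [h0, zero_pow hm.ne'] at hdet
  exact not_isUnit_zero hdet

lemma sum_mul_toeplitzUT_eq_single_iff (hm : 0 < m) {c : Fin m → ℂ} (hc : c ⟨0, hm⟩ ≠ 0)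
    (d : Fin m → ℂ) :
    (∀ q : Fin m, ∑ a, c a * toeplitzUT m d a q = if (q : ℕ) = 0 then 1 else 0) ↔
      toeplitzUT m d = (toeplitzUT m c)⁻¹ := by
  have hrow (q : Fin m) :
      (toeplitzUT m c * toeplitzUT m d) ⟨0, hm⟩ q = ∑ a, c a * toeplitzUT m d a q := by
    simp only [mul_apply, toeplitzUT_apply_zero_left]
  have hone (q : Fin m) :
      (1 : Matrix (Fin m) (Fin m) ℂ) ⟨0, hm⟩ q = if (q : ℕ) = 0 then 1 else 0 := by
    simp [one_apply, Fin.ext_iff, eq_comm]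
  simp only [← hrow, ← hone]
  constructor
  · intro h
    refine (inv_eq_right_inv (ext_of_commute_shiftM hm ?_ (Commute.one_left _) (funext h))).symm
    exact (commute_toeplitzUT_shiftM c).mul_left (commute_toeplitzUT_shiftM d)
  · intro h q
    rw [h, mul_nonsing_inv _ (isUnit_det_toeplitzUT hm hc)]

end Toeplitz

section BlockDiagonal

variable {ℓ : ℕ} {n : Fin ℓ → ℕ}

lemma toep_apply_same (hc : (m : Fin ℓ) → Fin (n m) → ℂ) (j : Fin ℓ) (a b : Fin (n j)) :
    toep ℓ n hc ⟨j, a⟩ ⟨j, b⟩ = toeplitzUT (n j) (hc j) a b := by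
  simp only [toep, toeplitzUT, of_apply, dite_true]

lemma toep_apply_of_ne (hc : (m : Fin ℓ) → Fin (n m) → ℂ) {p q : Idx ℓ n} (hpq : p.1 ≠ q.1) :
    toep ℓ n hc p q = 0 :=
  dif_neg hpq

lemma sum_mul_toep (hc : (m : Fin ℓ) → Fin (n m) → ℂ) (v : Idx ℓ n → ℂ) (j : Fin ℓ)
    (q : Fin (n j)) :
    ∑ b, v b * toep ℓ n hc b ⟨j, q⟩ = ∑ a, v ⟨j, a⟩ * toeplitzUT (n j) (hc j) a q := by
  rw [← Finset.univ_sigma_univ, Finset.sum_sigma, Finset.sum_eq_single j]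
  · simp only [toep_apply_same]
  · exact fun i _ hij => Finset.sum_eq_zero fun a _ => by rw [toep_apply_of_ne hc hij, mul_zero]
  · exact fun hj => absurd (Finset.mem_univ j) hj

end BlockDiagonal

theorem normalization_of_second_row_by_Hlambda_general
    (ℓ : ℕ) (n : Fin ℓ → ℕ) (hn : ∀ j, 0 < n j)
    (z : Fin 2 → Idx ℓ n → ℂ)
    (hz : ∀ j : Fin ℓ, z 1 ⟨j, ⟨0, hn j⟩⟩ ≠ 0)
    (Z : (j : Fin ℓ) → Matrix (Fin (n j)) (Fin (n j)) ℂ)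
    (hZ : ∀ j : Fin ℓ, Z j = ∑ k : Fin (n j), z 1 ⟨j, k⟩ • shiftM (n j) ^ (k : ℕ)) :
    (∃! h : Idx ℓ n → Idx ℓ n → ℂ,
      (∃ hc : (m : Fin ℓ) → Fin (n m) → ℂ,
        (∀ m : Fin ℓ, hc m ⟨0, hn m⟩ ≠ 0) ∧ h = toep ℓ n hc) ∧
      (∀ (j : Fin ℓ) (q : Fin (n j)),
        (∑ b : Idx ℓ n, z 1 b * h b ⟨j, q⟩) = if (q : ℕ) = 0 then 1 else 0)) ∧
    (∀ h : Idx ℓ n → Idx ℓ n → ℂ,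
      (∃ hc : (m : Fin ℓ) → Fin (n m) → ℂ,
        (∀ m : Fin ℓ, hc m ⟨0, hn m⟩ ≠ 0) ∧ h = toep ℓ n hc) →
      (∀ (j : Fin ℓ) (q : Fin (n j)),
        (∑ b : Idx ℓ n, z 1 b * h b ⟨j, q⟩) = if (q : ℕ) = 0 then 1 else 0) →
      (∀ (j : Fin ℓ) (a b : Fin (n j)), h ⟨j, a⟩ ⟨j, b⟩ = (Z j)⁻¹ a b) ∧
      (∀ (j : Fin ℓ) (q : Fin (n j)),
        (∑ b : Idx ℓ n, z 0 b * h b ⟨j, q⟩) = ∑ a : Fin (n j), z 0 ⟨j, a⟩ * (Z j)⁻¹ a q)) := by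
  have hZT : ∀ j, Z j = toeplitzUT (n j) (fun k => z 1 ⟨j, k⟩) :=
    fun j => (hZ j).trans (sum_smul_shiftM_pow _)
  have hnormal : ∀ hc : (m : Fin ℓ) → Fin (n m) → ℂ,
      (∀ (j : Fin ℓ) (q : Fin (n j)),
        ∑ b, z 1 b * toep ℓ n hc b ⟨j, q⟩ = if (q : ℕ) = 0 then 1 else 0) ↔
      ∀ j, toeplitzUT (n j) (hc j) = (Z j)⁻¹ := fun hc => by
    simp only [sum_mul_toep, hZT]
    exact forall_congr' fun j => sum_mul_toeplitzUT_eq_single_iff (hn j) (hz j) (hc j)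
  let hc₀ : (m : Fin ℓ) → Fin (n m) → ℂ := fun m => (Z m)⁻¹ ⟨0, hn m⟩
  have hc₀_spec : ∀ j, toeplitzUT (n j) (hc₀ j) = (Z j)⁻¹ := fun j => by
    simp only [hc₀, hZT]
    exact (inv_toeplitzUT (hn j) _).symm
  refine ⟨⟨toep ℓ n hc₀, ⟨⟨hc₀, fun m => ?_, rfl⟩, (hnormal hc₀).2 hc₀_spec⟩, ?_⟩, ?_⟩
  · simpa only [hc₀, hZT] using inv_toeplitzUT_zero_zero_ne_zero (hn m) (hz m)
  · rintro _ ⟨⟨hc, -, rfl⟩, hcond⟩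
    have hT := (hnormal hc).1 hcond
    congr 1
    exact funext fun j => toeplitzUT_injective ((hT j).trans (hc₀_spec j).symm)
  · rintro _ ⟨hc, -, rfl⟩ hcond
    have hT := (hnormal hc).1 hcond
    exact ⟨fun j a b => by rw [toep_apply_same, hT], fun j q => by rw [sum_mul_toep, hT]⟩

theorem normalization_of_second_row_by_Hlambda
    (ℓ N : ℕ) (n : Fin ℓ → ℕ) (hn : ∀ j, 0 < n j) (hN : ∑ j, n j = N)
    (z : Fin 2 → Idx ℓ n → ℂ)
    (hz : ∀ j : Fin ℓ, z 1 ⟨j, ⟨0, hn j⟩⟩ ≠ 0)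
    (Z : (j : Fin ℓ) → Matrix (Fin (n j)) (Fin (n j)) ℂ)
    (hZ : ∀ j : Fin ℓ, Z j = ∑ k : Fin (n j), z 1 ⟨j, k⟩ • shiftM (n j) ^ (k : ℕ)) :
    (∃! h : Idx ℓ n → Idx ℓ n → ℂ,
      (∃ hc : (m : Fin ℓ) → Fin (n m) → ℂ,
        (∀ m : Fin ℓ, hc m ⟨0, hn m⟩ ≠ 0) ∧ h = toep ℓ n hc) ∧
      (∀ (j : Fin ℓ) (q : Fin (n j)),
        (∑ b : Idx ℓ n, z 1 b * h b ⟨j, q⟩) = if (q : ℕ) = 0 then 1 else 0)) ∧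
    (∀ h : Idx ℓ n → Idx ℓ n → ℂ,
      (∃ hc : (m : Fin ℓ) → Fin (n m) → ℂ,
        (∀ m : Fin ℓ, hc m ⟨0, hn m⟩ ≠ 0) ∧ h = toep ℓ n hc) →
      (∀ (j : Fin ℓ) (q : Fin (n j)),
        (∑ b : Idx ℓ n, z 1 b * h b ⟨j, q⟩) = if (q : ℕ) = 0 then 1 else 0) →
      (∀ (j : Fin ℓ) (a b : Fin (n j)), h ⟨j, a⟩ ⟨j, b⟩ = (Z j)⁻¹ a b) ∧
      (∀ (j : Fin ℓ) (q : Fin (n j)),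
        (∑ b : Idx ℓ n, z 0 b * h b ⟨j, q⟩) = ∑ a : Fin (n j), z 0 ⟨j, a⟩ * (Z j)⁻¹ a q)) :=
  normalization_of_second_row_by_Hlambda_general ℓ n hn z hz Z hZ
end

section
/- Let α, β ∈ ℂ∖ℤ and A ∈ ℂ, A ≠ 0. Set p(α,β;m) = (α+m)(β−m+1) for m ∈ ℤ, and define constants T_m by T_0 = 1, T_1 = A, T_m = A^m·∏_{k=0}^{m−1}(∏_{l=1}^{k} p(α,β;l)) for m ≥ 2, and T_m = A^m·∏_{k=1}^{−m}(∏_{l=−k+1}^{0} p(α,β;l)) for m ≤ −1. On the open set Ω = {(x,y) ∈ ℂ² : x−y ∉ (−∞,0]} (so that the principal complex power is holomorphic), the functions t_m(x,y) = (x−y)^{p(α,β;m)}·T_m satisfy the bilinear 2dTHE: t_m·∂x∂y t_m − (∂x t_m)·(∂y t_m) = t_{m+1}·t_{m−1} on Ω for every m ∈ ℤ. -/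
open Complex

lemma Complex.mem_slitPlane_of_forall_ne_ofReal {z : ℂ} (h : ∀ r : ℝ, r ≤ 0 → z ≠ r) :
    z ∈ slitPlane := by
  rw [mem_slitPlane_iff]
  by_contra! hz
  exact h z.re hz.1 (Complex.ext rfl (by simp [hz.2]))

lemma Finset.prod_range_prod_range_add_two_mul {M : Type*} [CommMonoid M] (a : ℕ → M) (n : ℕ) :
    (∏ k ∈ range (n + 2), ∏ l ∈ range k, a l) * ∏ k ∈ range n, ∏ l ∈ range k, a l =
      a n * (∏ k ∈ range (n + 1), ∏ l ∈ range k, a l) ^ 2 := by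
  simp only [sq, prod_range_succ]
  ac_rfl

noncomputable def subCPowMul (w c : ℂ) : ℂ × ℂ → ℂ := fun P => (P.1 - P.2) ^ w * c

namespace subCPowMul

variable (w c : ℂ) {P : ℂ × ℂ}

lemma pdx_eq (hP : P.1 - P.2 ∈ slitPlane) :
    pdx (subCPowMul w c) P = w * (P.1 - P.2) ^ (w - 1) * c := by
  have h : HasDerivAt (fun s => subCPowMul w c (s, P.2)) (w * (P.1 - P.2) ^ (w - 1) * c) P.1 := by
    simpa [subCPowMul] using
      (((hasDerivAt_id P.1).sub_const P.2).cpow_const (c := w) hP).mul_const c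
  exact h.deriv

lemma pdy_eq (hP : P.1 - P.2 ∈ slitPlane) :
    pdy (subCPowMul w c) P = (P.1 - P.2) ^ (w - 1) * (-w * c) := by
  have h : HasDerivAt (fun s => subCPowMul w c (P.1, s)) (w * (P.1 - P.2) ^ (w - 1) * -1 * c) P.2 :=
    (((hasDerivAt_id P.2).const_sub P.1).cpow_const (c := w) hP).mul_const c
  rw [pdy, h.deriv]
  ring

lemma pdx_pdy_eq (hP : P.1 - P.2 ∈ slitPlane) :
    pdx (pdy (subCPowMul w c)) P = (w - 1) * (P.1 - P.2) ^ (w - 1 - 1) * (-w * c) := by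
  have hnear : (fun s => pdy (subCPowMul w c) (s, P.2)) =ᶠ[nhds P.1]
      fun s => subCPowMul (w - 1) (-w * c) (s, P.2) := by
    have hopen : IsOpen {s : ℂ | s - P.2 ∈ slitPlane} :=
      isOpen_slitPlane.preimage (continuous_id.sub continuous_const)
    filter_upwards [hopen.mem_nhds hP] with s hs
    exact pdy_eq w c hs
  rw [pdx, hnear.deriv_eq]
  exact pdx_eq (w - 1) (-w * c) hP

theorem hirota_eq (hP : P.1 - P.2 ∈ slitPlane) :
    subCPowMul w c P * pdx (pdy (subCPowMul w c)) P - pdx (subCPowMul w c) P *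
      pdy (subCPowMul w c) P = w * c ^ 2 * ((P.1 - P.2) ^ (w - 1)) ^ 2 := by
  have hz := slitPlane_ne_zero hP
  have hsplit : (P.1 - P.2) ^ w * (P.1 - P.2) ^ (w - 1 - 1) = ((P.1 - P.2) ^ (w - 1)) ^ 2 := by
    rw [← cpow_add _ _ hz, sq, ← cpow_add _ _ hz]
    ring_nf
  rw [pdx_pdy_eq w c hP, pdx_eq w c hP, pdy_eq w c hP, subCPowMul]
  linear_combination (-w * (w - 1) * c ^ 2) * hsplit

end subCPowMul

section TodaConstants

open Finset

variable {A : ℂ} {pf T : ℤ → ℂ}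

lemma todaConstants_natCast (hT0 : T 0 = 1) (hT1 : T 1 = A)
    (hTpos : ∀ m : ℤ, 2 ≤ m →
      T m = A ^ m * ∏ k ∈ Finset.range m.toNat, ∏ l ∈ Finset.range k, pf ((l : ℤ) + 1))
    (n : ℕ) : T n = A ^ n * ∏ k ∈ range n, ∏ l ∈ range k, pf ((l : ℤ) + 1) := by
  match n with
  | 0 => simpa using hT0
  | 1 => simpa using hT1
  | n + 2 => rw [hTpos (n + 2 : ℕ) (by omega), zpow_natCast, Int.toNat_natCast]

lemma todaConstants_neg_natCast (hT0 : T 0 = 1)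
    (hTneg : ∀ m : ℤ, m ≤ -1 →
      T m = A ^ m * ∏ k ∈ Finset.range (-m).toNat, ∏ l ∈ Finset.range (k + 1), pf (-(l : ℤ)))
    (n : ℕ) : T (-n) = (A ^ n)⁻¹ * ∏ k ∈ range (n + 1), ∏ l ∈ range k, pf (-(l : ℤ)) := by
  rw [prod_range_succ']
  match n with
  | 0 => simpa using hT0
  | n + 1 => rw [hTneg _ (by omega), neg_neg, Int.toNat_natCast, zpow_neg, zpow_natCast,
    prod_range_zero, mul_one]

theorem todaConstants_succ_mul_pred (hA : A ≠ 0) (hT0 : T 0 = 1) (hT1 : T 1 = A)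
    (hTpos : ∀ m : ℤ, 2 ≤ m →
      T m = A ^ m * ∏ k ∈ Finset.range m.toNat, ∏ l ∈ Finset.range k, pf ((l : ℤ) + 1))
    (hTneg : ∀ m : ℤ, m ≤ -1 →
      T m = A ^ m * ∏ k ∈ Finset.range (-m).toNat, ∏ l ∈ Finset.range (k + 1), pf (-(l : ℤ)))
    (m : ℤ) : T (m + 1) * T (m - 1) = pf m * T m ^ 2 := by
  have hpos := todaConstants_natCast hT0 hT1 hTpos
  have hneg := todaConstants_neg_natCast hT0 hTneg
  have hzero : T (0 + 1) * T (0 - 1) = pf 0 * T 0 ^ 2 := by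
    have h := hneg 1
    simp only [Nat.cast_one, pow_one, prod_range_succ, prod_range_zero] at h
    rw [zero_add, zero_sub, hT1, hT0, h, Nat.cast_zero, neg_zero]
    field_simp
  obtain ⟨n, rfl | rfl⟩ := Int.eq_nat_or_neg m
  · rcases n with _ | n
    · exact hzero
    · have h := prod_range_prod_range_add_two_mul (fun l : ℕ => pf ((l : ℤ) + 1)) n
      rw [show ((n + 1 : ℕ) : ℤ) + 1 = (n + 2 : ℕ) by push_cast; ring,
        show ((n + 1 : ℕ) : ℤ) - 1 = n by push_cast; ring, hpos, hpos, hpos]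
      push_cast at h ⊢
      linear_combination A ^ (2 * n + 2) * h
  · rcases n with _ | n
    · exact hzero
    · have h := prod_range_prod_range_add_two_mul (fun l : ℕ => pf (-(l : ℤ))) (n + 1)
      rw [show -((n + 1 : ℕ) : ℤ) + 1 = -(n : ℕ) by push_cast; ring,
        show -((n + 1 : ℕ) : ℤ) - 1 = -(n + 2 : ℕ) by push_cast; ring, hneg, hneg, hneg]
      push_cast at h ⊢
      linear_combination (A ^ (2 * n + 2))⁻¹ * h

end TodaConstants

theorem seed_solution_epd_case_general
    (α β : ℂ)
    (A : ℂ) (hA : A ≠ 0)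
    (pf : ℤ → ℂ) (hpf : ∀ m : ℤ, pf m = (α + (m : ℂ)) * (β - (m : ℂ) + 1))
    (T : ℤ → ℂ) (hT0 : T 0 = 1) (hT1 : T 1 = A)
    (hTpos : ∀ m : ℤ, 2 ≤ m →
      T m = A ^ m * ∏ k ∈ Finset.range m.toNat, ∏ l ∈ Finset.range k, pf ((l : ℤ) + 1))
    (hTneg : ∀ m : ℤ, m ≤ -1 →
      T m = A ^ m * ∏ k ∈ Finset.range (-m).toNat, ∏ l ∈ Finset.range (k + 1), pf (-(l : ℤ)))
    (Ω : Set (ℂ × ℂ))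
    (hΩ : Ω = {P : ℂ × ℂ | ∀ r : ℝ, r ≤ 0 → P.1 - P.2 ≠ (r : ℂ)})
    (t : ℤ → ℂ × ℂ → ℂ)
    (ht : ∀ (m : ℤ) (P : ℂ × ℂ), t m P = (P.1 - P.2) ^ pf m * T m) :
    ∀ m : ℤ, ∀ P ∈ Ω,
      t m P * pdx (pdy (t m)) P - pdx (t m) P * pdy (t m) P = t (m + 1) P * t (m - 1) P := by
  intro m P hP
  subst hΩ
  have hz : P.1 - P.2 ∈ slitPlane := mem_slitPlane_of_forall_ne_ofReal hP
  have hz0 := slitPlane_ne_zero hz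
  have ht' : ∀ m, t m = subCPowMul (pf m) (T m) := fun m => funext (ht m)
  have hexp : pf (m + 1) + pf (m - 1) = (pf m - 1) + (pf m - 1) := by
    rw [hpf, hpf, hpf]
    push_cast
    ring
  rw [ht' m, subCPowMul.hirota_eq _ _ hz, ht', ht', subCPowMul, subCPowMul, mul_mul_mul_comm,
    ← cpow_add _ _ hz0, hexp, cpow_add _ _ hz0,
    todaConstants_succ_mul_pred hA hT0 hT1 hTpos hTneg m]
  ring

theorem seed_solution_epd_case
    (α β : ℂ) (hα : ∀ m : ℤ, α ≠ (m : ℂ)) (hβ : ∀ m : ℤ, β ≠ (m : ℂ))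
    (A : ℂ) (hA : A ≠ 0)
    (pf : ℤ → ℂ) (hpf : ∀ m : ℤ, pf m = (α + (m : ℂ)) * (β - (m : ℂ) + 1))
    (T : ℤ → ℂ) (hT0 : T 0 = 1) (hT1 : T 1 = A)
    (hTpos : ∀ m : ℤ, 2 ≤ m →
      T m = A ^ m * ∏ k ∈ Finset.range m.toNat, ∏ l ∈ Finset.range k, pf ((l : ℤ) + 1))
    (hTneg : ∀ m : ℤ, m ≤ -1 →
      T m = A ^ m * ∏ k ∈ Finset.range (-m).toNat, ∏ l ∈ Finset.range (k + 1), pf (-(l : ℤ)))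
    (Ω : Set (ℂ × ℂ))
    (hΩ : Ω = {P : ℂ × ℂ | ∀ r : ℝ, r ≤ 0 → P.1 - P.2 ≠ (r : ℂ)})
    (t : ℤ → ℂ × ℂ → ℂ)
    (ht : ∀ (m : ℤ) (P : ℂ × ℂ), t m P = (P.1 - P.2) ^ pf m * T m) :
    ∀ m : ℤ, ∀ P ∈ Ω,
      t m P * pdx (pdy (t m)) P - pdx (t m) P * pdy (t m) P = t (m + 1) P * t (m - 1) P :=
  seed_solution_epd_case_general α β A hA pf hpf T hT0 hT1 hTpos hTneg Ω hΩ t ht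
end

section
/- Let u ∈ ℂ, α ∈ ℂ∖ℤ, β ∈ ℂ with β ≠ 0, and A ∈ ℂ with A ≠ 0. For k ∈ ℤ define [α]_k = ∏_{l=1}^{k−1}(α+l) for k ≥ 1 (empty product 1 for k = 1), [α]_0 = 1, and [α]_k = ∏_{l=k+1}^{0}(α+l) for k ≤ −1 (so [α]_k = Γ(α+k)/Γ(α+1) for k ≥ 1 and [α]_k = Γ(α+1)/Γ(α+1+k) for k ≤ −1). Set T_m = A^m·β^{m(m−1)/2}·∏_{k∈⟨0,m⟩}[α]_k, where ⟨0,m⟩ is the set of integers between 0 and m inclusive. On the open set Ω = {(x,y) ∈ ℂ² : x ≠ u}, the functions t_m(x,y) = exp((α+m)·β·y/(u−x))·(u−x)^{−m(m−1)}·T_m satisfy the bilinear 2dTHE: t_m·∂x∂y t_m − (∂x t_m)·(∂y t_m) = t_{m+1}·t_{m−1} on Ω for every m ∈ ℤ. -/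
open Finset Filter Topology

theorem prod_range_succ_succ_mul_prod_range {M : Type*} [CommMonoid M] (f : ℕ → M) (r : M)
    (n : ℕ) (h : f (n + 2) = r * f (n + 1)) :
    (∏ k ∈ range (n + 3), f k) * ∏ k ∈ range (n + 1), f k = r * (∏ k ∈ range (n + 2), f k) ^ 2 := by
  rw [prod_range_succ _ (n + 2), prod_range_succ _ (n + 1), h, sq]
  ac_rfl

theorem zpow_triangular_succ_mul_pred {K : Type*} [GroupWithZero K] {b : K} (hb : b ≠ 0) (m : ℤ) :
    b ^ ((m + 1) * (m + 1 - 1) / 2) * b ^ ((m - 1) * (m - 1 - 1) / 2)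
      = b * (b ^ (m * (m - 1) / 2)) ^ 2 := by
  have hm : 2 ∣ m * (m - 1) := (Int.even_mul_pred_self m).two_dvd
  have e : (m + 1) * (m + 1 - 1) / 2 + (m - 1) * (m - 1 - 1) / 2 = 1 + m * (m - 1) / 2 * 2 := by
    rw [show (m + 1) * (m + 1 - 1) = m * (m - 1) + 2 * m by ring,
      show (m - 1) * (m - 1 - 1) = m * (m - 1) + 2 * (1 - m) by ring]
    generalize m * (m - 1) = p at hm ⊢
    omega
  rw [← zpow_add₀ hb, e, zpow_add₀ hb, zpow_one, zpow_mul, zpow_two, sq]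

theorem zpow_succ_mul_zpow_pred {K : Type*} [GroupWithZero K] {a : K} (ha : a ≠ 0) (m : ℤ) :
    a ^ (m + 1) * a ^ (m - 1) = (a ^ m) ^ 2 := by
  rw [← zpow_add₀ ha, ← zpow_natCast, ← zpow_mul]; ring_nf

theorem toda_prefactor_mul {K : Type*} [Field K] {A β : K} (hA : A ≠ 0) (hβ : β ≠ 0)
    (m : ℤ) {a b c r : K} (h : a * b = r * c ^ 2) :
    A ^ (m + 1) * β ^ ((m + 1) * (m + 1 - 1) / 2) * a
        * (A ^ (m - 1) * β ^ ((m - 1) * (m - 1 - 1) / 2) * b)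
      = r * β * (A ^ m * β ^ (m * (m - 1) / 2) * c) ^ 2 := by
  calc _ = (A ^ (m + 1) * A ^ (m - 1)) * (β ^ ((m + 1) * (m + 1 - 1) / 2)
        * β ^ ((m - 1) * (m - 1 - 1) / 2)) * (a * b) := by ring
    _ = _ := by rw [zpow_succ_mul_zpow_pred hA, zpow_triangular_succ_mul_pred hβ, h]; ring

section Brackets

variable {α : ℂ} {br : ℤ → ℂ}

theorem bracket_natCast_succ
    (hbrpos : ∀ k : ℤ, 1 ≤ k → br k = ∏ l ∈ range (k.toNat - 1), (α + ((l : ℂ) + 1))) (n : ℕ) :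
    br (n + 1 : ℕ) = ∏ l ∈ range n, (α + ((l : ℂ) + 1)) := by
  rw [hbrpos _ (by omega)]
  simp

theorem bracket_neg_natCast_succ
    (hbrneg : ∀ k : ℤ, k ≤ -1 → br k = ∏ l ∈ range (-k).toNat, (α - (l : ℂ))) (n : ℕ) :
    br (-(n + 1 : ℕ)) = ∏ l ∈ range (n + 1), (α - (l : ℂ)) := by
  rw [hbrneg _ (by omega)]
  simp

variable {β A : ℂ} {T : ℤ → ℂ}

theorem T_succ_mul_T_pred (hβ : β ≠ 0) (hA : A ≠ 0)
    (hbr0 : br 0 = 1)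
    (hbrpos : ∀ k : ℤ, 1 ≤ k →
      br k = ∏ l ∈ range (k.toNat - 1), (α + ((l : ℂ) + 1)))
    (hbrneg : ∀ k : ℤ, k ≤ -1 →
      br k = ∏ l ∈ range (-k).toNat, (α - (l : ℂ)))
    (hTpos : ∀ m : ℤ, 0 ≤ m →
      T m = A ^ m * β ^ (m * (m - 1) / 2) * ∏ k ∈ range (m.toNat + 1), br (k : ℤ))
    (hTneg : ∀ m : ℤ, m ≤ 0 →
      T m = A ^ m * β ^ (m * (m - 1) / 2) * ∏ k ∈ range ((-m).toNat + 1), br (-(k : ℤ)))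
    (m : ℤ) : T (m + 1) * T (m - 1) = (α + m) * β * T m ^ 2 := by
  rcases lt_trichotomy m 0 with hm | rfl | hm
  · obtain ⟨n, hn⟩ : ∃ n : ℕ, m = -(n + 1 : ℕ) := ⟨(-m - 1).toNat, by omega⟩
    rw [hTneg (m + 1) (by omega), hTneg (m - 1) (by omega), hTneg m (by omega),
      show (-(m + 1)).toNat = n by omega, show (-(m - 1)).toNat = n + 2 by omega,
      show (-m).toNat = n + 1 by omega]
    -- for `m < 0` the longer product sits in `T (m - 1)`
    refine toda_prefactor_mul hA hβ m
      ((mul_comm _ _).trans (prod_range_succ_succ_mul_prod_range _ _ n ?_))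
    rw [bracket_neg_natCast_succ hbrneg, bracket_neg_natCast_succ hbrneg, prod_range_succ, hn]
    push_cast
    ring
  · have hbr1 : br 1 = 1 := by simpa using bracket_natCast_succ hbrpos 0
    have hbrm1 : br (-1) = α := by simpa using bracket_neg_natCast_succ hbrneg 0
    rw [hTpos (0 + 1) (by norm_num), hTneg (0 - 1) (by norm_num), hTpos 0 le_rfl]
    refine toda_prefactor_mul hA hβ 0 ?_
    simp [prod_range_succ, hbr0, hbr1, hbrm1]
  · obtain ⟨n, hn⟩ : ∃ n : ℕ, m = (n + 1 : ℕ) := ⟨(m - 1).toNat, by omega⟩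
    rw [hTpos (m + 1) (by omega), hTpos (m - 1) (by omega), hTpos m (by omega),
      show (m + 1).toNat = n + 2 by omega, show (m - 1).toNat = n by omega,
      show m.toNat = n + 1 by omega]
    refine toda_prefactor_mul hA hβ m (prod_range_succ_succ_mul_prod_range _ _ n ?_)
    rw [bracket_natCast_succ hbrpos, bracket_natCast_succ hbrpos, prod_range_succ, hn]
    push_cast
    ring

end Brackets

theorem toda_bilinear_of_pdy_eq_mul {F : ℂ × ℂ → ℂ} {g : ℂ → ℂ} {g' x : ℂ} (y : ℂ)
    (hF : (fun s => pdy F (s, y)) =ᶠ[𝓝 x] fun s => g s * F (s, y)) (hg : HasDerivAt g g' x)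
    (hFx : DifferentiableAt ℂ (fun s => F (s, y)) x) :
    F (x, y) * pdx (pdy F) (x, y) - pdx F (x, y) * pdy F (x, y) = g' * F (x, y) ^ 2 := by
  have hxy : pdx (pdy F) (x, y) = g' * F (x, y) + g x * pdx F (x, y) :=
    (hF.deriv_eq).trans (hg.mul hFx.hasDerivAt).deriv
  rw [hxy, hF.eq_of_nhds]
  ring

theorem pdy_cexp_mul {F : ℂ × ℂ → ℂ} (c : ℂ) (w k : ℂ → ℂ)
    (hF : ∀ P : ℂ × ℂ, F P = Complex.exp (c * P.2 / w P.1) * k P.1) (P : ℂ × ℂ) :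
    pdy F P = c / w P.1 * F P := by
  have hline : HasDerivAt (fun τ => F (P.1, τ))
      (Complex.exp (c * P.2 / w P.1) * (c / w P.1) * k P.1) P.2 := by
    simp only [hF]
    exact (((hasDerivAt_id P.2).const_mul c).div_const (w P.1)).cexp.mul_const (k P.1)
      |>.congr_deriv (by simp)
  rw [pdy, hline.deriv, hF]
  ring

theorem hasDerivAt_const_div_const_sub {c u x : ℂ} (hx : x ≠ u) :
    HasDerivAt (fun s => c / (u - s)) (c / (u - x) ^ 2) x := by
  have hw : u - x ≠ 0 := sub_ne_zero.mpr hx.symm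
  have h := (hasDerivAt_const x c).div ((hasDerivAt_id x).const_sub u) hw
  simp only [id] at h
  exact h.congr_deriv (by ring)

theorem t_succ_mul_t_pred {α β u₀ x y : ℂ} {T : ℤ → ℂ} {t : ℤ → ℂ × ℂ → ℂ}
    (ht : ∀ (m : ℤ) (P : ℂ × ℂ),
      t m P = Complex.exp ((α + (m : ℂ)) * β * P.2 / (u₀ - P.1))
        * (u₀ - P.1) ^ (-(m * (m - 1))) * T m)
    (hx : x ≠ u₀) (m : ℤ) (hT : T (m + 1) * T (m - 1) = (α + m) * β * T m ^ 2) :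
    t (m + 1) (x, y) * t (m - 1) (x, y) = (α + m) * β / (u₀ - x) ^ 2 * t m (x, y) ^ 2 := by
  have hw : u₀ - x ≠ 0 := sub_ne_zero.mpr hx.symm
  have hexp : Complex.exp ((α + ↑(m + 1)) * β * y / (u₀ - x))
      * Complex.exp ((α + ↑(m - 1)) * β * y / (u₀ - x))
      = Complex.exp ((α + m) * β * y / (u₀ - x)) ^ 2 := by
    rw [← Complex.exp_add, sq, ← Complex.exp_add]
    push_cast
    ring_nf
  have hzpow : (u₀ - x) ^ (-((m + 1) * (m + 1 - 1))) * (u₀ - x) ^ (-((m - 1) * (m - 1 - 1)))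
      = ((u₀ - x) ^ (-(m * (m - 1)))) ^ 2 / (u₀ - x) ^ 2 := by
    rw [← zpow_add₀ hw, ← zpow_natCast, ← zpow_mul, ← zpow_natCast, ← zpow_sub₀ hw]
    ring_nf
  simp only [ht]
  calc _ = (Complex.exp ((α + ↑(m + 1)) * β * y / (u₀ - x))
      * Complex.exp ((α + ↑(m - 1)) * β * y / (u₀ - x)))
      * ((u₀ - x) ^ (-((m + 1) * (m + 1 - 1))) * (u₀ - x) ^ (-((m - 1) * (m - 1 - 1))))
      * (T (m + 1) * T (m - 1)) := by ring
    _ = _ := by rw [hexp, hzpow, hT]; ring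

theorem seed_solution_one_confluent_case_general
    (u₀ : ℂ) (α β A : ℂ)
    (hβ : β ≠ 0) (hA : A ≠ 0)
    (br : ℤ → ℂ)
    (hbr0 : br 0 = 1)
    (hbrpos : ∀ k : ℤ, 1 ≤ k →
      br k = ∏ l ∈ Finset.range (k.toNat - 1), (α + ((l : ℂ) + 1)))
    (hbrneg : ∀ k : ℤ, k ≤ -1 →
      br k = ∏ l ∈ Finset.range (-k).toNat, (α - (l : ℂ)))
    (T : ℤ → ℂ)
    (hTpos : ∀ m : ℤ, 0 ≤ m →
      T m = A ^ m * β ^ (m * (m - 1) / 2) * ∏ k ∈ Finset.range (m.toNat + 1), br (k : ℤ))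
    (hTneg : ∀ m : ℤ, m ≤ 0 →
      T m = A ^ m * β ^ (m * (m - 1) / 2) * ∏ k ∈ Finset.range ((-m).toNat + 1), br (-(k : ℤ)))
    (Ω : Set (ℂ × ℂ)) (hΩ : Ω = {P : ℂ × ℂ | P.1 ≠ u₀})
    (t : ℤ → ℂ × ℂ → ℂ)
    (ht : ∀ (m : ℤ) (P : ℂ × ℂ),
      t m P = Complex.exp ((α + (m : ℂ)) * β * P.2 / (u₀ - P.1))
        * (u₀ - P.1) ^ (-(m * (m - 1))) * T m) :
    ∀ m : ℤ, ∀ P ∈ Ω,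
      t m P * pdx (pdy (t m)) P - pdx (t m) P * pdy (t m) P = t (m + 1) P * t (m - 1) P := by
  subst hΩ
  rintro m ⟨x, y⟩ (hx : x ≠ u₀)
  have hw : u₀ - x ≠ 0 := sub_ne_zero.mpr hx.symm
  have hexp : ∀ P : ℂ × ℂ, t m P = Complex.exp ((α + m) * β * P.2 / (u₀ - P.1))
      * ((u₀ - P.1) ^ (-(m * (m - 1))) * T m) := fun P => by rw [ht, mul_assoc]
  have hdiff : DifferentiableAt ℂ (fun s => t m (s, y)) x := by
    simp only [ht]
    fun_prop (disch := simp [hw])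
  rw [t_succ_mul_t_pred ht hx m (T_succ_mul_T_pred hβ hA hbr0 hbrpos hbrneg hTpos hTneg m)]
  exact toda_bilinear_of_pdy_eq_mul y
    (Eventually.of_forall fun s =>
      pdy_cexp_mul _ (u₀ - ·) (fun s => (u₀ - s) ^ (-(m * (m - 1))) * T m) hexp (s, y))
    (hasDerivAt_const_div_const_sub hx) hdiff

theorem seed_solution_one_confluent_case
    (u₀ : ℂ) (α β A : ℂ)
    (hα : ∀ m : ℤ, α ≠ (m : ℂ)) (hβ : β ≠ 0) (hA : A ≠ 0)
    (br : ℤ → ℂ)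
    (hbr0 : br 0 = 1)
    (hbrpos : ∀ k : ℤ, 1 ≤ k →
      br k = ∏ l ∈ Finset.range (k.toNat - 1), (α + ((l : ℂ) + 1)))
    (hbrneg : ∀ k : ℤ, k ≤ -1 →
      br k = ∏ l ∈ Finset.range (-k).toNat, (α - (l : ℂ)))
    (T : ℤ → ℂ)
    (hTpos : ∀ m : ℤ, 0 ≤ m →
      T m = A ^ m * β ^ (m * (m - 1) / 2) * ∏ k ∈ Finset.range (m.toNat + 1), br (k : ℤ))
    (hTneg : ∀ m : ℤ, m ≤ 0 →
      T m = A ^ m * β ^ (m * (m - 1) / 2) * ∏ k ∈ Finset.range ((-m).toNat + 1), br (-(k : ℤ)))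
    (Ω : Set (ℂ × ℂ)) (hΩ : Ω = {P : ℂ × ℂ | P.1 ≠ u₀})
    (t : ℤ → ℂ × ℂ → ℂ)
    (ht : ∀ (m : ℤ) (P : ℂ × ℂ),
      t m P = Complex.exp ((α + (m : ℂ)) * β * P.2 / (u₀ - P.1))
        * (u₀ - P.1) ^ (-(m * (m - 1))) * T m) :
    ∀ m : ℤ, ∀ P ∈ Ω,
      t m P * pdx (pdy (t m)) P - pdx (t m) P * pdy (t m) P = t (m + 1) P * t (m - 1) P :=
  seed_solution_one_confluent_case_general u₀ α β A hβ hA br hbr0 hbrpos hbrneg T hTpos hTneg Ω hΩ t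
    ht
end

section
/- Let u, v ∈ ℂ with u ≠ v, and let α, β, A ∈ ℂ all nonzero. On ℂ² with coordinates (x,y), the functions t_m(x,y) = exp(α·β·x·y/(u−v)²)·(u−v)^{−m(m−1)}·A^m·(α·β)^{m(m−1)/2} satisfy the bilinear 2dTHE: t_m·∂x∂y t_m − (∂x t_m)·(∂y t_m) = t_{m+1}·t_{m−1} on ℂ² for every m ∈ ℤ. -/
/-!
Since `m(m−1)` is even, `t_m = A^m k^(m(m−1)/2) e^{kxy}` with `k = αβ/(u−v)²`.
Every `f = c e^{kxy}` has `∂x∂y log f = k`, i.e. `f f_xy − f_x f_y = k f²`, and the identity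
`T(m+1) + T(m−1) = 2 T(m) + 1` for `T(m) = m(m−1)/2` gives `t_{m+1} t_{m−1} = k t_m²`.
-/

open Complex

section ExpBilinear

variable (k c : ℂ)

lemma pdy_const_mul_exp_mul :
    pdy (fun P => c * exp (k * P.1 * P.2)) = fun P => k * P.1 * (c * exp (k * P.1 * P.2)) := by
  funext P
  have h := (((hasDerivAt_id' P.2).const_mul (k * P.1)).cexp).const_mul c
  exact h.deriv.trans (by ring)

lemma pdx_const_mul_exp_mul :
    pdx (fun P => c * exp (k * P.1 * P.2)) = fun P => k * P.2 * (c * exp (k * P.1 * P.2)) := by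
  funext P
  have h := ((((hasDerivAt_id' P.1).const_mul k).mul_const P.2).cexp).const_mul c
  exact h.deriv.trans (by ring)

lemma pdx_pdy_const_mul_exp_mul (P : ℂ × ℂ) :
    pdx (pdy fun P => c * exp (k * P.1 * P.2)) P
      = (k + k ^ 2 * P.1 * P.2) * (c * exp (k * P.1 * P.2)) := by
  have hexp := (((hasDerivAt_id' P.1).const_mul k).mul_const P.2).cexp
  have h := ((hasDerivAt_id' P.1).const_mul k).mul (hexp.const_mul c)
  rw [pdy_const_mul_exp_mul]
  exact h.deriv.trans (by ring)

theorem bilinear_of_eq_const_mul_exp_mul {f : ℂ × ℂ → ℂ}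
    (hf : f = fun P => c * exp (k * P.1 * P.2)) (P : ℂ × ℂ) :
    f P * pdx (pdy f) P - pdx f P * pdy f P = k * f P ^ 2 := by
  subst hf
  rw [pdx_pdy_const_mul_exp_mul, pdx_const_mul_exp_mul, pdy_const_mul_exp_mul]
  ring

end ExpBilinear

lemma Int.mul_pred_div_two_add (m : ℤ) :
    (m + 1) * (m + 1 - 1) / 2 + (m - 1) * (m - 1 - 1) / 2 = 2 * (m * (m - 1) / 2) + 1 := by
  have h₁ : (m + 1) * (m + 1 - 1) = m * (m - 1) + 2 * m := by ring
  have h₂ : (m - 1) * (m - 1 - 1) = m * (m - 1) - 2 * m + 2 := by ring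
  omega

noncomputable def todaSeed (k A : ℂ) (m : ℤ) (P : ℂ × ℂ) : ℂ :=
  A ^ m * k ^ (m * (m - 1) / 2) * exp (k * P.1 * P.2)

theorem todaSeed_bilinear {k A : ℂ} (hk : k ≠ 0) (hA : A ≠ 0) (m : ℤ) (P : ℂ × ℂ) :
    todaSeed k A m P * pdx (pdy (todaSeed k A m)) P - pdx (todaSeed k A m) P * pdy (todaSeed k A m) P
      = todaSeed k A (m + 1) P * todaSeed k A (m - 1) P := by
  have hcoeff : A ^ (m + 1) * k ^ ((m + 1) * (m + 1 - 1) / 2)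
      * (A ^ (m - 1) * k ^ ((m - 1) * (m - 1 - 1) / 2))
      = k * (A ^ m * k ^ (m * (m - 1) / 2)) ^ 2 := by
    rw [mul_mul_mul_comm, ← zpow_add₀ hA, ← zpow_add₀ hk, Int.mul_pred_div_two_add,
      zpow_add_one₀ hk, show m + 1 + (m - 1) = 2 * m by ring, zpow_mul', zpow_mul', zpow_ofNat,
      zpow_ofNat]
    ring
  rw [bilinear_of_eq_const_mul_exp_mul (f := todaSeed k A m) k _ rfl]
  simp only [todaSeed]
  linear_combination -exp (k * P.1 * P.2) ^ 2 * hcoeff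

lemma zpow_neg_mul_pred {G : Type*} [DivisionMonoid G] (d : G) (m : ℤ) :
    d ^ (-(m * (m - 1))) = ((d ^ 2)⁻¹) ^ (m * (m - 1) / 2) := by
  rw [← Int.mul_ediv_cancel' (Int.even_mul_pred_self m).two_dvd, ← neg_mul, zpow_mul,
    Int.mul_ediv_cancel_left _ two_ne_zero, zpow_neg, zpow_ofNat]

theorem seed_solution_doubly_confluent_case
    (u₀ v₀ : ℂ) (huv : u₀ ≠ v₀)
    (α β A : ℂ) (hα : α ≠ 0) (hβ : β ≠ 0) (hA : A ≠ 0)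
    (t : ℤ → ℂ × ℂ → ℂ)
    (ht : ∀ (m : ℤ) (P : ℂ × ℂ),
      t m P = Complex.exp (α * β * P.1 * P.2 / (u₀ - v₀) ^ 2)
        * (u₀ - v₀) ^ (-(m * (m - 1))) * A ^ m * (α * β) ^ (m * (m - 1) / 2)) :
    ∀ m : ℤ, ∀ P : ℂ × ℂ,
      t m P * pdx (pdy (t m)) P - pdx (t m) P * pdy (t m) P = t (m + 1) P * t (m - 1) P := by
  have hk : α * β / (u₀ - v₀) ^ 2 ≠ 0 :=
    div_ne_zero (mul_ne_zero hα hβ) (pow_ne_zero 2 (sub_ne_zero.mpr huv))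
  have ht_eq : t = todaSeed (α * β / (u₀ - v₀) ^ 2) A := by
    funext m P
    have harg : α * β * P.1 * P.2 / (u₀ - v₀) ^ 2 = α * β / (u₀ - v₀) ^ 2 * P.1 * P.2 := by ring
    rw [ht, zpow_neg_mul_pred, todaSeed, harg, div_eq_mul_inv (α * β), mul_zpow (α * β)]
    ring
  rw [ht_eq]
  exact todaSeed_bilinear hk hA
end

section
/- Let p, q ∈ ℂ with p ≠ q, let α, β, A ∈ ℂ all nonzero, and let Ω ⊆ ℂ² be a nonempty open set with coordinates (x,y). Let (u_m)_{m∈ℤ} be holomorphic functions on Ω satisfying, for every m ∈ ℤ: (i) ∂x∂y u_m + (β/(p−q))·∂x u_m − (α/(p−q))·∂y u_m = 0; (ii) u_{m+1} = (p−q)·∂y u_m + β·u_m; (iii) u_{m−1} = ((q−p)·∂x u_m + α·u_m)/(α·β). Define τ_m(x,y) = exp(α·β·x·y/(p−q)² − α·x/(p−q))·(p−q)^{−m(m−1)}·A^m·(α·β)^{m(m−1)/2}·u_m(x,y). Then (τ_m)_{m∈ℤ} satisfies the bilinear 2dTHE: τ_m·∂x∂y τ_m − (∂x τ_m)·(∂y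 τ_m) = τ_{m+1}·τ_{m−1} on Ω for every m ∈ ℤ. -/
open Filter Topology

/-- Half of Hirota's bilinear derivative `D_x D_y f · f`. -/
noncomputable def hirota (f : ℂ × ℂ → ℂ) (P : ℂ × ℂ) : ℂ :=
  f P * pdx (pdy f) P - pdx f P * pdy f P

theorem pdx_const_mul (c : ℂ) (f : ℂ × ℂ → ℂ) :
    pdx (fun Q => c * f Q) = fun Q => c * pdx f Q :=
  funext fun Q => deriv_const_mul_field (v := fun t => f (t, Q.2)) c

theorem pdy_const_mul (c : ℂ) (f : ℂ × ℂ → ℂ) :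
    pdy (fun Q => c * f Q) = fun Q => c * pdy f Q :=
  funext fun Q => deriv_const_mul_field (v := fun t => f (Q.1, t)) c

theorem hirota_const_mul (c : ℂ) (f : ℂ × ℂ → ℂ) (P : ℂ × ℂ) :
    hirota (fun Q => c * f Q) P = c ^ 2 * hirota f P := by
  simp only [hirota, pdx_const_mul, pdy_const_mul]
  ring

section PartialDerivatives

variable {f g : ℂ × ℂ → ℂ} {P : ℂ × ℂ}

theorem DifferentiableAt.hasDerivAt_pdx (h : DifferentiableAt ℂ f P) :
    HasDerivAt (fun t => f (t, P.2)) (pdx f P) P.1 :=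
  (h.comp P.1 (by fun_prop : DifferentiableAt ℂ (fun t : ℂ => (t, P.2)) P.1)).hasDerivAt

theorem DifferentiableAt.hasDerivAt_pdy (h : DifferentiableAt ℂ f P) :
    HasDerivAt (fun t => f (P.1, t)) (pdy f P) P.2 :=
  (h.comp P.2 (by fun_prop : DifferentiableAt ℂ (fun t : ℂ => (P.1, t)) P.2)).hasDerivAt

theorem pdx_congr_of_eventuallyEq (h : f =ᶠ[𝓝 P] g) : pdx f P = pdx g P :=
  Filter.EventuallyEq.deriv_eq <|
    ((Continuous.prodMk_left P.2).tendsto P.1).eventually h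

theorem pdx_add_s18 (hf : DifferentiableAt ℂ f P) (hg : DifferentiableAt ℂ g P) :
    pdx (fun Q => f Q + g Q) P = pdx f P + pdx g P :=
  (hf.hasDerivAt_pdx.add hg.hasDerivAt_pdx).deriv

theorem pdx_mul_s18 (hf : DifferentiableAt ℂ f P) (hg : DifferentiableAt ℂ g P) :
    pdx (fun Q => f Q * g Q) P = pdx f P * g P + f P * pdx g P :=
  (hf.hasDerivAt_pdx.mul hg.hasDerivAt_pdx).deriv

theorem pdy_mul_s18 (hf : DifferentiableAt ℂ f P) (hg : DifferentiableAt ℂ g P) :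
    pdy (fun Q => f Q * g Q) P = pdy f P * g P + f P * pdy g P :=
  (hf.hasDerivAt_pdy.mul hg.hasDerivAt_pdy).deriv

theorem hirota_mul (hf : ∀ᶠ Q in 𝓝 P, DifferentiableAt ℂ f Q)
    (hg : ∀ᶠ Q in 𝓝 P, DifferentiableAt ℂ g Q)
    (hfy : DifferentiableAt ℂ (pdy f) P) (hgy : DifferentiableAt ℂ (pdy g) P) :
    hirota (fun Q => f Q * g Q) P = g P ^ 2 * hirota f P + f P ^ 2 * hirota g P := by
  have hf₀ := hf.self_of_nhds
  have hg₀ := hg.self_of_nhds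
  have hy : pdy (fun Q => f Q * g Q) =ᶠ[𝓝 P] fun Q => pdy f Q * g Q + f Q * pdy g Q :=
    (hf.and hg).mono fun Q hQ => pdy_mul_s18 hQ.1 hQ.2
  have hxy : pdx (pdy (fun Q => f Q * g Q)) P =
      pdx (pdy f) P * g P + pdy f P * pdx g P + (pdx f P * pdy g P + f P * pdx (pdy g) P) := by
    rw [pdx_congr_of_eventuallyEq hy,
      pdx_add_s18 (f := fun Q => pdy f Q * g Q) (g := fun Q => f Q * pdy g Q)
        (hfy.mul hg₀) (hf₀.mul hgy),
      pdx_mul_s18 hfy hg₀, pdx_mul_s18 hf₀ hgy]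
  simp only [hirota, hxy, pdx_mul_s18 hf₀ hg₀, pdy_mul_s18 hf₀ hg₀]
  ring

end PartialDerivatives

noncomputable def expGauge (a b : ℂ) (Q : ℂ × ℂ) : ℂ :=
  Complex.exp (a * Q.1 * Q.2 + b * Q.1)

section ExpGauge

variable (a b : ℂ)

theorem differentiable_expGauge : Differentiable ℂ (expGauge a b) := by
  unfold expGauge
  fun_prop

theorem pdx_expGauge (Q : ℂ × ℂ) : pdx (expGauge a b) Q = (a * Q.2 + b) * expGauge a b Q := by
  have h : HasDerivAt (fun t => a * t * Q.2 + b * t) (a * 1 * Q.2 + b * 1) Q.1 :=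
    (((hasDerivAt_id' Q.1).const_mul a).mul_const Q.2).add ((hasDerivAt_id' Q.1).const_mul b)
  simp only [pdx, expGauge, h.cexp.deriv]
  ring

theorem pdy_expGauge : pdy (expGauge a b) = fun Q => a * Q.1 * expGauge a b Q := by
  funext Q
  have h : HasDerivAt (fun t => a * Q.1 * t + b * Q.1) (a * Q.1 * 1) Q.2 :=
    ((hasDerivAt_id' Q.2).const_mul (a * Q.1)).add_const (b * Q.1)
  simp only [pdy, expGauge, h.cexp.deriv]
  ring

theorem differentiable_pdy_expGauge : Differentiable ℂ (pdy (expGauge a b)) := by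
  rw [pdy_expGauge]
  exact (by fun_prop : Differentiable ℂ fun Q : ℂ × ℂ => a * Q.1).mul
    (differentiable_expGauge a b)

theorem hirota_expGauge (P : ℂ × ℂ) : hirota (expGauge a b) P = a * expGauge a b P ^ 2 := by
  have hx : pdx (fun Q : ℂ × ℂ => a * Q.1) P = a := by simp [pdx]
  have hxy :
      pdx (pdy (expGauge a b)) P = a * expGauge a b P + a * P.1 * pdx (expGauge a b) P := by
    rw [pdy_expGauge, pdx_mul_s18 (by fun_prop) (differentiable_expGauge a b P), hx]
  rw [hirota, hxy, pdy_expGauge, pdx_expGauge]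
  ring

theorem hirota_const_mul_expGauge_mul (c : ℂ) {u : ℂ × ℂ → ℂ} {P : ℂ × ℂ}
    (hu : ∀ᶠ Q in 𝓝 P, DifferentiableAt ℂ u Q) (huy : DifferentiableAt ℂ (pdy u) P) :
    hirota (fun Q => c * (expGauge a b Q * u Q)) P =
      c ^ 2 * expGauge a b P ^ 2 * (hirota u P + a * u P ^ 2) := by
  rw [hirota_const_mul, hirota_mul (.of_forall (differentiable_expGauge a b)) hu
    (differentiable_pdy_expGauge a b P) huy, hirota_expGauge]
  ring

end ExpGauge

noncomputable def todaCoeff {K : Type*} [Field K] (s A c : K) (m : ℤ) : K :=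
  s ^ (-(m * (m - 1))) * A ^ m * c ^ (m * (m - 1) / 2)

theorem todaCoeff_succ_mul_pred {K : Type*} [Field K] {s A c : K} (hs : s ≠ 0) (hA : A ≠ 0)
    (hc : c ≠ 0) (m : ℤ) :
    todaCoeff s A c (m + 1) * todaCoeff s A c (m - 1) = c / s ^ 2 * todaCoeff s A c m ^ 2 := by
  obtain ⟨e, he⟩ := Int.even_mul_pred_self m
  have h₀ : m * (m - 1) = 2 * e := by rw [he, two_mul]
  have hsucc : (m + 1) * (m + 1 - 1) = 2 * (e + m) := by linear_combination h₀
  have hpred : (m - 1) * (m - 1 - 1) = 2 * (e - m + 1) := by linear_combination h₀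
  have hs2 : s ^ (2 : ℤ) ≠ 0 := zpow_ne_zero 2 hs
  simp only [todaCoeff, h₀, hsucc, hpred, Int.mul_ediv_cancel_left _ two_ne_zero,
    zpow_mul, zpow_neg, zpow_add₀ hs2, zpow_add₀ hA, zpow_add₀ hc, zpow_sub₀ hs2, zpow_sub₀ hA,
    zpow_sub₀ hc, zpow_one]
  field_simp

theorem differentiableAt_pdy_of_raising {s β : ℂ} {u v : ℂ × ℂ → ℂ} {Ω : Set (ℂ × ℂ)}
    {P : ℂ × ℂ} (hs : s ≠ 0) (hΩ : IsOpen Ω) (hP : P ∈ Ω) (hu : DifferentiableAt ℂ u P)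
    (hv : DifferentiableAt ℂ v P) (hraise : ∀ Q ∈ Ω, v Q = s * pdy u Q + β * u Q) :
    DifferentiableAt ℂ (pdy u) P := by
  have heq : pdy u =ᶠ[𝓝 P] fun Q => (v Q - β * u Q) / s :=
    eventually_of_mem (hΩ.mem_nhds hP) fun Q hQ =>
      (eq_div_iff hs).mpr (by rw [hraise Q hQ]; ring)
  exact DifferentiableAt.congr_of_eventuallyEq (by fun_prop) heq

theorem hirota_add_mul_sq_of_contiguity {s α β : ℂ} {u v w : ℂ × ℂ → ℂ} {P : ℂ × ℂ}
    (hs : s ≠ 0) (hα : α ≠ 0) (hβ : β ≠ 0)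
    (hpde : pdx (pdy u) P + β / s * pdx u P - α / s * pdy u P = 0)
    (hv : v P = s * pdy u P + β * u P) (hw : w P = (-s * pdx u P + α * u P) / (α * β)) :
    hirota u P + α * β / s ^ 2 * u P ^ 2 = α * β / s ^ 2 * (v P * w P) := by
  have hxy : pdx (pdy u) P = (α * pdy u P - β * pdx u P) / s := by
    field_simp at hpde ⊢
    linear_combination hpde
  rw [hirota, hxy, hv, hw]
  field_simp
  ring

theorem gelfand_hgf_solves_toda_hirota_doubly_confluent_general
    (p q : ℂ) (hpq : p ≠ q)
    (α β A : ℂ) (hα : α ≠ 0) (hβ : β ≠ 0) (hA : A ≠ 0)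
    (Ω : Set (ℂ × ℂ)) (hΩ : IsOpen Ω)
    (u : ℤ → ℂ × ℂ → ℂ)
    (hudiff : ∀ m : ℤ, DifferentiableOn ℂ (u m) Ω)
    (hpde : ∀ m : ℤ, ∀ P ∈ Ω,
      pdx (pdy (u m)) P + (β / (p - q)) * pdx (u m) P - (α / (p - q)) * pdy (u m) P = 0)
    (hup : ∀ m : ℤ, ∀ P ∈ Ω, u (m + 1) P = (p - q) * pdy (u m) P + β * u m P)
    (hdown : ∀ m : ℤ, ∀ P ∈ Ω,
      u (m - 1) P = ((q - p) * pdx (u m) P + α * u m P) / (α * β))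
    (τ : ℤ → ℂ × ℂ → ℂ)
    (hτ : ∀ (m : ℤ) (P : ℂ × ℂ),
      τ m P = Complex.exp (α * β * P.1 * P.2 / (p - q) ^ 2 - α * P.1 / (p - q))
        * (p - q) ^ (-(m * (m - 1))) * A ^ m * (α * β) ^ (m * (m - 1) / 2) * u m P) :
    ∀ m : ℤ, ∀ P ∈ Ω,
      τ m P * pdx (pdy (τ m)) P - pdx (τ m) P * pdy (τ m) P = τ (m + 1) P * τ (m - 1) P := by
  intro m P hP
  have hs : p - q ≠ 0 := sub_ne_zero.mpr hpq
  set E := expGauge (α * β / (p - q) ^ 2) (-(α / (p - q)))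
  set C := todaCoeff (p - q) A (α * β)
  have hτE (k : ℤ) : τ k = fun Q => C k * (E Q * u k Q) := by
    funext Q
    rw [hτ, show α * β * Q.1 * Q.2 / (p - q) ^ 2 - α * Q.1 / (p - q) =
      α * β / (p - q) ^ 2 * Q.1 * Q.2 + -(α / (p - q)) * Q.1 by ring]
    simp only [E, C, expGauge, todaCoeff]
    ring
  have hu (k : ℤ) : ∀ᶠ Q in 𝓝 P, DifferentiableAt ℂ (u k) Q :=
    (hudiff k).eventually_differentiableAt (hΩ.mem_nhds hP)
  have huy : DifferentiableAt ℂ (pdy (u m)) P := differentiableAt_pdy_of_raising hs hΩ hP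
    (hu m).self_of_nhds (hu (m + 1)).self_of_nhds (hup m)
  have hcontig := hirota_add_mul_sq_of_contiguity (v := u (m + 1)) (w := u (m - 1)) hs hα hβ
    (hpde m P hP) (hup m P hP) (by rw [hdown m P hP, neg_sub])
  have hcoeff : C (m + 1) * C (m - 1) = α * β / (p - q) ^ 2 * C m ^ 2 :=
    todaCoeff_succ_mul_pred hs hA (mul_ne_zero hα hβ) m
  rw [← hirota, hτE, hirota_const_mul_expGauge_mul _ _ _ (hu m) huy, hcontig, hτE, hτE]
  linear_combination (-(E P ^ 2 * u (m + 1) P * u (m - 1) P)) * hcoeff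

theorem gelfand_hgf_solves_toda_hirota_doubly_confluent
    (p q : ℂ) (hpq : p ≠ q)
    (α β A : ℂ) (hα : α ≠ 0) (hβ : β ≠ 0) (hA : A ≠ 0)
    (Ω : Set (ℂ × ℂ)) (hΩ : IsOpen Ω) (hne : Ω.Nonempty)
    (u : ℤ → ℂ × ℂ → ℂ)
    (hudiff : ∀ m : ℤ, DifferentiableOn ℂ (u m) Ω)
    (hpde : ∀ m : ℤ, ∀ P ∈ Ω,
      pdx (pdy (u m)) P + (β / (p - q)) * pdx (u m) P - (α / (p - q)) * pdy (u m) P = 0)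
    (hup : ∀ m : ℤ, ∀ P ∈ Ω, u (m + 1) P = (p - q) * pdy (u m) P + β * u m P)
    (hdown : ∀ m : ℤ, ∀ P ∈ Ω,
      u (m - 1) P = ((q - p) * pdx (u m) P + α * u m P) / (α * β))
    (τ : ℤ → ℂ × ℂ → ℂ)
    (hτ : ∀ (m : ℤ) (P : ℂ × ℂ),
      τ m P = Complex.exp (α * β * P.1 * P.2 / (p - q) ^ 2 - α * P.1 / (p - q))
        * (p - q) ^ (-(m * (m - 1))) * A ^ m * (α * β) ^ (m * (m - 1) / 2) * u m P) :
    ∀ m : ℤ, ∀ P ∈ Ω,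
      τ m P * pdx (pdy (τ m)) P - pdx (τ m) P * pdy (τ m) P = τ (m + 1) P * τ (m - 1) P :=
  gelfand_hgf_solves_toda_hirota_doubly_confluent_general p q hpq α β A hα hβ hA Ω hΩ u hudiff hpde
    hup hdown τ hτ
end
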